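/- arXiv:math/0607488 — 2 statements merged into one kernel-verified Lean document; each statement's English description precedes it below -/
import Mathlib

section
/- Let S₁ be a set of projections on the Hilbert space H₁, S₂ a set of projections on the Hilbert space H₂, χ : S₁ → S₂ a surjective map, and M = {T ∈ B(H₁,H₂) : TL = χ(L)T for all L ∈ S₁}. Then M is a reflexive TRO; and if moreover M is essential, then the w*-closed linear span of M*M equals the commutant S₁′ of S₁ and the w*-closed linear span of MM* equals the commutant S₂′ of S₂. -/
noncomputable section

open ContinuousLinearMap

universe u v w

section OperatorDefs

variable {H : Type u} {K : Type v} {L : Type w}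
variable [NormedAddCommGroup H] [InnerProductSpace ℂ H] [CompleteSpace H]
variable [NormedAddCommGroup K] [InnerProductSpace ℂ K] [CompleteSpace K]
variable [NormedAddCommGroup L] [InnerProductSpace ℂ L] [CompleteSpace L]

/-- The set of all products (compositions) `a ∘ b` with `a ∈ M`, `b ∈ N`. -/
def mulSet (M : Set (K →L[ℂ] L)) (N : Set (H →L[ℂ] K)) : Set (H →L[ℂ] L) :=
  Set.image2 (fun a b => a.comp b) M N

/-- The set `M* = {T* : T ∈ M}` of adjoints of members of `M`. -/
def adjSet (M : Set (H →L[ℂ] K)) : Set (K →L[ℂ] H) :=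
  (fun T => ContinuousLinearMap.adjoint T) '' M

/-- A subset of a complex vector space is a linear subspace. -/
def IsLinSubspace {V : Type*} [AddCommGroup V] [Module ℂ V] (S : Set V) : Prop :=
  ∃ p : Submodule ℂ V, S = ↑p

/-- The σ-weak (ultraweak, w*) topology on `B(H,K)`: the initial topology induced by the
functionals `T ↦ ∑ₙ ⟪yₙ, T xₙ⟫` for square-summable sequences `(xₙ)`, `(yₙ)`. -/
def sigmaWeak (H : Type u) (K : Type v) [NormedAddCommGroup H] [InnerProductSpace ℂ H]
    [NormedAddCommGroup K] [InnerProductSpace ℂ K] : TopologicalSpace (H →L[ℂ] K) :=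
  ⨅ (x : ℕ → H) (y : ℕ → K) (_ : Summable fun n => ‖x n‖ ^ 2)
    (_ : Summable fun n => ‖y n‖ ^ 2),
    TopologicalSpace.induced (fun T => ∑' n, (inner ℂ (y n) (T (x n)) : ℂ)) inferInstance

/-- `S` is closed in the w* (σ-weak) topology. -/
def IsWStarClosed (S : Set (H →L[ℂ] K)) : Prop := @IsClosed _ (sigmaWeak H K) S

/-- The w*-closed linear span of a set of operators. -/
def wspan (S : Set (H →L[ℂ] K)) : Set (H →L[ℂ] K) :=
  @closure _ (sigmaWeak H K) ((Submodule.span ℂ S : Submodule ℂ (H →L[ℂ] K)) : Set (H →L[ℂ] K))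

/-- A ternary ring of operators: a linear subspace `M` with `M M* M ⊆ M`. -/
def IsTRO (M : Set (H →L[ℂ] K)) : Prop :=
  IsLinSubspace M ∧ mulSet (mulSet M (adjSet M)) M ⊆ M

/-- The orthogonal projection (as an operator on `K`) onto the closed linear span of `S`. -/
def projOntoClosure (S : Set K) : K →L[ℂ] K :=
  haveI : CompleteSpace ((Submodule.span ℂ S).topologicalClosure) :=
    (Submodule.isClosed_topologicalClosure _).completeSpace_coe
  ((Submodule.span ℂ S).topologicalClosure).subtypeL.comp
    (Submodule.orthogonalProjectionOnto ((Submodule.span ℂ S).topologicalClosure))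

/-- `Map(U)` : sends a projection `P` on `H` to the projection onto the closed linear span of
`{T P ξ : T ∈ U, ξ ∈ H}`. -/
def opMap (U : Set (H →L[ℂ] K)) (P : H →L[ℂ] H) : K →L[ℂ] K :=
  projOntoClosure {y : K | ∃ T ∈ U, ∃ ξ : H, T (P ξ) = y}

/-- `U` is essential: `Map(U)(I) = I` and `Map(U*)(I) = I`. -/
def IsEssential (U : Set (H →L[ℂ] K)) : Prop :=
  opMap U 1 = 1 ∧ opMap (adjSet U) 1 = 1

/-- The commutant of a set of operators. -/
def commutantS (S : Set (H →L[ℂ] H)) : Set (H →L[ℂ] H) :=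
  {T | ∀ s ∈ S, s * T = T * s}

/-- An (orthogonal) projection. -/
def IsProjOp (P : H →L[ℂ] H) : Prop := P * P = P ∧ star P = P

/-- The natural order on projections: `P ≤ Q` iff `P Q = P`. -/
def projLE (P Q : H →L[ℂ] H) : Prop := P * Q = P

/-- The invariant projection lattice of an algebra: `Lat(A) = {L : L⊥ A L = 0}`. -/
def LatSet (A : Set (H →L[ℂ] H)) : Set (H →L[ℂ] H) :=
  {P | IsProjOp P ∧ ∀ T ∈ A, (1 - P) * (T * P) = 0}

/-- `Alg(S) = {T : L⊥ T L = 0 for all L ∈ S}`. -/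
def AlgSet (S : Set (H →L[ℂ] H)) : Set (H →L[ℂ] H) :=
  {T | ∀ P ∈ S, (1 - P) * (T * P) = 0}

/-- The reflexive hull of a space of operators. -/
def RefHull (U : Set (H →L[ℂ] K)) : Set (H →L[ℂ] K) :=
  {T | ∀ ξ : H, T ξ ∈
    closure ((Submodule.span ℂ ((fun S : H →L[ℂ] K => S ξ) '' U) : Submodule ℂ K) : Set K)}

/-- The diagonal `Δ(A) = A ∩ A*` of an algebra. -/
def diagSet (A : Set (H →L[ℂ] H)) : Set (H →L[ℂ] H) := A ∩ (star '' A)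

/-- A w*-closed (not necessarily unital, not necessarily selfadjoint) operator algebra. -/
def IsWStarClosedAlgebra (A : Set (H →L[ℂ] H)) : Prop :=
  IsLinSubspace A ∧ (∀ a ∈ A, ∀ b ∈ A, a * b ∈ A) ∧ IsWStarClosed A

/-- `A ∼_M B` : TRO equivalence via the TRO `M`. -/
def TROEquivalentVia (A : Set (H →L[ℂ] H)) (B : Set (K →L[ℂ] K))
    (M : Set (H →L[ℂ] K)) : Prop :=
  IsTRO M ∧ A = wspan (mulSet (mulSet (adjSet M) B) M) ∧
    B = wspan (mulSet (mulSet M A) (adjSet M))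

/-- TRO equivalence of two algebras. -/
def TROEquivalent (A : Set (H →L[ℂ] H)) (B : Set (K →L[ℂ] K)) : Prop :=
  ∃ M : Set (H →L[ℂ] K), TROEquivalentVia A B M

/-- `θ` restricts to a * isomorphism of `C` onto `E`. -/
def IsStarIsomOn (θ : (H →L[ℂ] H) → (K →L[ℂ] K)) (C : Set (H →L[ℂ] H))
    (E : Set (K →L[ℂ] K)) : Prop :=
  Set.BijOn θ C E ∧ (∀ a ∈ C, ∀ b ∈ C, θ (a + b) = θ a + θ b) ∧
    (∀ (c : ℂ), ∀ a ∈ C, θ (c • a) = c • θ a) ∧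
    (∀ a ∈ C, ∀ b ∈ C, θ (a * b) = θ a * θ b) ∧
    (∀ a ∈ C, θ (star a) = star (θ a))

/-- `φ` restricts to a lattice isomorphism (order preserving bijection) of `S₁` onto `S₂`. -/
def IsLatticeIsomOn (φ : (H →L[ℂ] H) → (K →L[ℂ] K)) (S₁ : Set (H →L[ℂ] H))
    (S₂ : Set (K →L[ℂ] K)) : Prop :=
  Set.BijOn φ S₁ S₂ ∧ ∀ P ∈ S₁, ∀ Q ∈ S₁, (projLE P Q ↔ projLE (φ P) (φ Q))

/-- The supremum of a family of projections: projection onto the closed span of the ranges. -/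
def latSup (F : Set (H →L[ℂ] H)) : H →L[ℂ] H :=
  projOntoClosure (⋃ P ∈ F, Set.range P)

/-- The infimum of a family of projections: projection onto the intersection of the ranges. -/
def latInf (F : Set (H →L[ℂ] H)) : H →L[ℂ] H :=
  projOntoClosure (⋂ P ∈ F, Set.range P)

/-- A commutative subspace lattice: commuting projections, `0, 1 ∈ S`, closed under
arbitrary suprema and infima. -/
def IsCSL (S : Set (H →L[ℂ] H)) : Prop :=
  (∀ P ∈ S, IsProjOp P) ∧ (∀ P ∈ S, ∀ Q ∈ S, P * Q = Q * P) ∧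
    (0 : H →L[ℂ] H) ∈ S ∧ (1 : H →L[ℂ] H) ∈ S ∧
    ∀ F ⊆ S, latSup F ∈ S ∧ latInf F ∈ S

/-- `L♭ = ⋁ {M ∈ S : M < L}`. -/
def latFlat (S : Set (H →L[ℂ] H)) (P : H →L[ℂ] H) : H →L[ℂ] H :=
  latSup {M | M ∈ S ∧ projLE M P ∧ M ≠ P}

/-- An atom of the lattice `S` : a (nonzero) difference `L - L♭`. -/
def IsAtomOf (S : Set (H →L[ℂ] H)) (A : H →L[ℂ] H) : Prop :=
  ∃ P ∈ S, latFlat S P ≠ P ∧ A = P - latFlat S P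

/-- The sum (supremum) of the atoms of `S`. -/
def atomSum (S : Set (H →L[ℂ] H)) : H →L[ℂ] H :=
  latSup {A | IsAtomOf S A}

/-- A spatial Morita context `(A, B, U, V)`. -/
def IsSpatialMoritaContext (A : Set (H →L[ℂ] H)) (B : Set (K →L[ℂ] K))
    (U : Set (H →L[ℂ] K)) (V : Set (K →L[ℂ] H)) : Prop :=
  IsLinSubspace U ∧ IsLinSubspace V ∧
    mulSet (mulSet B U) A ⊆ U ∧ mulSet (mulSet A V) B ⊆ V ∧
    A = wspan (mulSet V U) ∧ B = wspan (mulSet U V)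

/-- Spatial Morita equivalence. -/
def SpatiallyMoritaEquivalent (A : Set (H →L[ℂ] H)) (B : Set (K →L[ℂ] K)) : Prop :=
  ∃ (U : Set (H →L[ℂ] K)) (V : Set (K →L[ℂ] H)), IsSpatialMoritaContext A B U V

/-- A maximal abelian selfadjoint algebra: `D = D* = D′`. -/
def IsMasa (D : Set (H →L[ℂ] H)) : Prop :=
  (∀ a ∈ D, star a ∈ D) ∧ commutantS D = D

/-- A reflexive masa bimodule `W` (over the masas `D₂`, `D₁`) is synthetic iff `W_min = W`,
equivalently `W` is contained in every w*-closed `D₂,D₁`-bimodule whose reflexive hull is `W`. -/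
def IsSyntheticWrt (D₂ : Set (K →L[ℂ] K)) (D₁ : Set (H →L[ℂ] H))
    (W : Set (H →L[ℂ] K)) : Prop :=
  ∀ V : Set (H →L[ℂ] K), IsLinSubspace V → IsWStarClosed V →
    mulSet (mulSet D₂ V) D₁ ⊆ V → RefHull V = W → W ⊆ V

/-- The weak operator topology on `B(H,K)`. -/
def wot (H : Type u) (K : Type v) [NormedAddCommGroup H] [InnerProductSpace ℂ H]
    [NormedAddCommGroup K] [InnerProductSpace ℂ K] : TopologicalSpace (H →L[ℂ] K) :=
  ⨅ (x : H) (y : K), TopologicalSpace.induced (fun T => (inner ℂ y (T x) : ℂ)) inferInstance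

/-- A von Neumann algebra: a unital selfadjoint subalgebra of `B(H)`, closed in the
weak operator topology. -/
def IsVonNeumannAlgebra (A : Set (H →L[ℂ] H)) : Prop :=
  IsLinSubspace A ∧ (∀ a ∈ A, ∀ b ∈ A, a * b ∈ A) ∧ (∀ a ∈ A, star a ∈ A) ∧
    (1 : H →L[ℂ] H) ∈ A ∧ @IsClosed _ (wot H H) A

/-- The direct sum `X ⊕ Y` of two operators, acting on the Hilbert space direct sum. -/
def dsum (X : H →L[ℂ] H) (Y : K →L[ℂ] K) :
    WithLp 2 (H × K) →L[ℂ] WithLp 2 (H × K) :=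
  (((WithLp.prodContinuousLinearEquiv 2 ℂ H K).symm :
      (H × K) →L[ℂ] WithLp 2 (H × K)).comp (X.prodMap Y)).comp
    ((WithLp.prodContinuousLinearEquiv 2 ℂ H K) : WithLp 2 (H × K) →L[ℂ] (H × K))

end OperatorDefs

section Lem22Aux
open scoped ENNReal

open TopologicalSpace

set_option linter.unusedSectionVars false
set_option maxHeartbeats 1000000

variable {H : Type*} {K : Type*}
variable [NormedAddCommGroup H] [InnerProductSpace ℂ H] [CompleteSpace H]
variable [NormedAddCommGroup K] [InnerProductSpace ℂ K] [CompleteSpace K]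
variable {ι : Type*}

def SWP (H K : Type*) [NormedAddCommGroup H] [InnerProductSpace ℂ H]
    [NormedAddCommGroup K] [InnerProductSpace ℂ K] : Type _ :=
  {q : (ℕ → H) × (ℕ → K) // (Summable fun n => ‖q.1 n‖ ^ 2) ∧ (Summable fun n => ‖q.2 n‖ ^ 2)}

def swfun (p : SWP H K) (T : H →L[ℂ] K) : ℂ := ∑' n, (inner ℂ (p.val.2 n) (T (p.val.1 n)) : ℂ)

lemma sigmaWeak_eq :
    sigmaWeak H K = TopologicalSpace.induced
      (fun T (p : SWP H K) => swfun p T) Pi.topologicalSpace := by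
  have hpi : (Pi.topologicalSpace : TopologicalSpace (SWP H K → ℂ)) =
      ⨅ p : SWP H K, TopologicalSpace.induced (fun g => g p) inferInstance := rfl
  rw [hpi, induced_iInf]
  simp_rw [induced_compose]
  unfold sigmaWeak
  apply le_antisymm
  · exact le_iInf fun p => iInf_le_of_le p.val.1 <| iInf_le_of_le p.val.2 <|
      iInf_le_of_le p.prop.1 <| iInf_le_of_le p.prop.2 le_rfl
  · exact le_iInf fun x => le_iInf fun y => le_iInf fun h1 => le_iInf fun h2 =>
      iInf_le_of_le ⟨(x, y), h1, h2⟩ le_rfl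


lemma continuous_swfun (p : SWP H K) : @Continuous _ _ (sigmaWeak H K) _ (swfun p) := by
  rw [continuous_iff_le_induced]
  exact iInf_le_of_le p.val.1 <| iInf_le_of_le p.val.2 <|
      iInf_le_of_le p.prop.1 <| iInf_le_of_le p.prop.2 le_rfl

lemma mem_wclosure_of (S : Set (H →L[ℂ] K)) (b : H →L[ℂ] K)
    (h : ∀ I : Finset (SWP H K), ∀ ε : SWP H K → ℝ, (∀ p ∈ I, 0 < ε p) →
      ∃ s ∈ S, ∀ p ∈ I, ‖swfun p s - swfun p b‖ < ε p) :
    b ∈ @closure _ (sigmaWeak H K) S := by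
  rw [sigmaWeak_eq, closure_induced]
  rw [mem_closure_iff_nhds]
  intro U hU
  rw [nhds_pi, Filter.mem_pi'] at hU
  obtain ⟨I, t, ht, hsub⟩ := hU
  choose ε hεpos hball using fun p => Metric.mem_nhds_iff.1 (ht p)
  obtain ⟨s, hsS, hs⟩ := h I ε (fun p _ => hεpos p)
  refine ⟨fun p => swfun p s, hsub ?_, Set.mem_image_of_mem _ hsS⟩
  intro p hp
  exact hball p (by simpa [Metric.mem_ball, dist_eq_norm] using hs p hp)

variable {ι : Type*}

lemma rpow_two_eq (x : ℝ) : x ^ (2 : ℝ≥0∞).toReal = x ^ 2 := by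
  rw [show (2:ℝ≥0∞).toReal = ((2:ℕ):ℝ) by norm_num, Real.rpow_natCast]

lemma memlp_of {v : ι → H} (hv : Summable fun i => ‖v i‖ ^ 2) : Memℓp v 2 := by
  apply memℓp_gen
  simpa only [rpow_two_eq] using hv

lemma lp2_normsq (f : lp (fun _ : ι => H) 2) : ‖f‖ ^ 2 = ∑' i, ‖f i‖ ^ 2 := by
  have h := lp.norm_rpow_eq_tsum (p := 2) (by norm_num) f
  simpa only [rpow_two_eq] using h

lemma lp2_summable (f : lp (fun _ : ι => H) 2) : Summable fun i => ‖f i‖ ^ 2 := by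
  have := (lp.memℓp f).summable (p := 2) (by norm_num)
  simpa only [rpow_two_eq] using this

/-- the diagonal operator on ℓ²(ι, H) induced by a bounded operator on H -/
def diagL (a : H →L[ℂ] H) : lp (fun _ : ι => H) 2 →L[ℂ] lp (fun _ : ι => H) 2 := by
  refine LinearMap.mkContinuous
    { toFun := fun f => ⟨fun i => a (f i), memlp_of ?_⟩
      map_add' := fun f g => ?_
      map_smul' := fun c f => ?_ } ‖a‖ ?_
  · apply (lp2_summable f).mul_left (‖a‖^2) |>.of_nonneg_of_le
      (fun i => by positivity)
    intro i
    calc ‖a (f i)‖ ^ 2 ≤ (‖a‖ * ‖f i‖) ^ 2 := by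
          apply pow_le_pow_left₀ (norm_nonneg _) (a.le_opNorm _)
      _ = ‖a‖ ^ 2 * ‖f i‖ ^ 2 := by ring
  · apply Subtype.ext; funext i
    simp only [lp.coeFn_add, Pi.add_apply, map_add]
  · apply Subtype.ext; funext i
    simp only [lp.coeFn_smul, Pi.smul_apply, map_smul, RingHom.id_apply]
  · intro f
    have key : ∀ g : lp (fun _ : ι => H) 2, (∀ i, g i = a (f i)) → ‖g‖ ≤ ‖a‖ * ‖f‖ := by
      intro g hg
      have hle : ∀ i, ‖g i‖ ^ 2 ≤ ‖a‖ ^ 2 * ‖f i‖ ^ 2 := by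
        intro i
        rw [hg i]
        calc ‖a (f i)‖ ^ 2 ≤ (‖a‖ * ‖f i‖) ^ 2 := by
              apply pow_le_pow_left₀ (norm_nonneg _) (a.le_opNorm _)
          _ = ‖a‖ ^ 2 * ‖f i‖ ^ 2 := by ring
      have h2 : ‖g‖ ^ 2 ≤ (‖a‖ * ‖f‖) ^ 2 := by
        rw [lp2_normsq]
        calc (∑' i, ‖g i‖ ^ 2) ≤ ∑' i, ‖a‖ ^ 2 * ‖f i‖ ^ 2 :=
              Summable.tsum_le_tsum hle ((lp2_summable f).mul_left (‖a‖^2) |>.of_nonneg_of_le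
                (fun i => by positivity) hle) ((lp2_summable f).mul_left _)
          _ = ‖a‖ ^ 2 * ∑' i, ‖f i‖ ^ 2 := tsum_mul_left
          _ = (‖a‖ * ‖f‖) ^ 2 := by rw [← lp2_normsq f]; ring
      have := Real.sqrt_le_sqrt h2
      rwa [Real.sqrt_sq (norm_nonneg _), Real.sqrt_sq (by positivity)] at this
    exact key _ (fun i => rfl)

lemma diagL_apply (a : H →L[ℂ] H) (f : lp (fun _ : ι => H) 2) (i : ι) :
    (diagL a f : ∀ _ : ι, H) i = a (f i) := rfl

lemma summable_op_sq (c : H →L[ℂ] K) {x : ι → H} (hx : Summable fun i => ‖x i‖ ^ 2) :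
    Summable fun i => ‖c (x i)‖ ^ 2 := by
  apply (hx.mul_left (‖c‖ ^ 2)).of_nonneg_of_le (fun i => by positivity)
  intro i
  calc ‖c (x i)‖ ^ 2 ≤ (‖c‖ * ‖x i‖) ^ 2 := by
        apply pow_le_pow_left₀ (norm_nonneg _) (c.le_opNorm _)
    _ = ‖c‖ ^ 2 * ‖x i‖ ^ 2 := by ring

lemma approx_lemma (N : Set (H →L[ℂ] H))
    (hmul : ∀ a ∈ N, ∀ b ∈ N, a * b ∈ N)
    (hstar : ∀ a ∈ N, star a ∈ N)
    (hnd : ∀ z : H, (∀ a ∈ N, ∀ v : H, (inner ℂ (a v) z : ℂ) = 0) → z = 0)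
    (x : ι → H) (hx : Summable fun i => ‖x i‖ ^ 2) {ε : ℝ} (hε : 0 < ε) :
    ∃ c ∈ Submodule.span ℂ N, (Summable fun i => ‖c (x i) - x i‖ ^ 2) ∧
      ∑' i, ‖c (x i) - x i‖ ^ 2 < ε := by
  set A := Submodule.span ℂ N with hA
  have hNA : ∀ a ∈ N, ∀ b, b ∈ A → a * b ∈ A := by
    intro a ha b hb
    induction hb using Submodule.span_induction with
    | mem y hy => exact Submodule.subset_span (hmul a ha y hy)
    | zero => rw [mul_zero]; exact A.zero_mem
    | add y z _ _ ihy ihz => rw [mul_add]; exact A.add_mem ihy ihz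
    | smul r y _ ih => rw [mul_smul_comm]; exact A.smul_mem r ih
  have hAmul : ∀ c ∈ A, ∀ b, b ∈ A → c * b ∈ A := by
    intro c hc b hb
    induction hc using Submodule.span_induction with
    | mem y hy => exact hNA y hy b hb
    | zero => rw [zero_mul]; exact A.zero_mem
    | add y z _ _ ihy ihz => rw [add_mul]; exact A.add_mem ihy ihz
    | smul r y _ ih => rw [smul_mul_assoc]; exact A.smul_mem r ih
  have hAstar : ∀ c ∈ A, star c ∈ A := by
    intro c hc
    induction hc using Submodule.span_induction with
    | mem y hy => exact Submodule.subset_span (hstar y hy)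
    | zero => rw [star_zero]; exact A.zero_mem
    | add y z _ _ ihy ihz => rw [star_add]; exact A.add_mem ihy ihz
    | smul r y _ ih => rw [star_smul]; exact A.smul_mem _ ih
  -- the ℓ² amplification
  let X : lp (fun _ : ι => H) 2 := ⟨x, memlp_of hx⟩
  let Psi : (H →L[ℂ] H) →ₗ[ℂ] lp (fun _ : ι => H) 2 :=
    { toFun := fun c => ⟨fun i => c (x i), memlp_of (summable_op_sq c hx)⟩
      map_add' := fun c d => by
        apply Subtype.ext; funext i
        simp only [lp.coeFn_add, Pi.add_apply, ContinuousLinearMap.add_apply]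
      map_smul' := fun r c => by
        apply Subtype.ext; funext i
        simp only [lp.coeFn_smul, Pi.smul_apply, ContinuousLinearMap.smul_apply,
          RingHom.id_apply] }
  set V₀ : Submodule ℂ (lp (fun _ : ι => H) 2) := A.map Psi with hV₀
  set V := V₀.topologicalClosure with hV
  haveI : CompleteSpace V := (Submodule.isClosed_topologicalClosure V₀).completeSpace_coe
  set PX : lp (fun _ : ι => H) 2 := (V.orthogonalProjectionOnto X : lp (fun _ : ι => H) 2) with hPX
  set z := X - PX with hz
  have hzorth : z ∈ Vᗮ := Submodule.sub_starProjection_mem_orthogonal (K := V) X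
  have hinv : ∀ c ∈ A, ∀ w, w ∈ V → diagL c w ∈ V := by
    intro c hc w hw
    have h1 : diagL c '' (V₀ : Set (lp (fun _ : ι => H) 2)) ⊆ (V₀ : Set (lp (fun _ : ι => H) 2)) := by
      rintro _ ⟨w', hw', rfl⟩
      obtain ⟨b, hb, rfl⟩ := Submodule.mem_map.1 hw'
      have he : diagL c (Psi b) = Psi (c * b) := by
        apply Subtype.ext; funext i; rfl
      rw [he]
      exact Submodule.mem_map_of_mem (hAmul c hc b hb)
    have hw' : w ∈ closure (V₀ : Set (lp (fun _ : ι => H) 2)) := by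
      rwa [← Submodule.topologicalClosure_coe, SetLike.mem_coe]
    have : diagL c w ∈ closure (V₀ : Set (lp (fun _ : ι => H) 2)) :=
      closure_mono h1 (image_closure_subset_closure_image (diagL c).continuous ⟨w, hw', rfl⟩)
    rwa [← Submodule.topologicalClosure_coe, SetLike.mem_coe] at this
  have hdz : ∀ c ∈ A, diagL c z = 0 := by
    intro c hc
    have hPsiC : Psi c ∈ V := V₀.le_topologicalClosure (Submodule.mem_map_of_mem hc)
    have h1 : diagL c z ∈ V := by
      have e1 : diagL c X = Psi c := Subtype.ext (funext fun i => rfl)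
      rw [hz, map_sub, e1]
      exact V.sub_mem hPsiC (hinv c hc _ (V.orthogonalProjectionOnto X).2)
    have h2 : diagL c z ∈ Vᗮ := by
      rw [Submodule.mem_orthogonal]
      intro w hw
      have e : (inner ℂ w (diagL c z) : ℂ) = inner ℂ (diagL (star c) w) z := by
        rw [lp.inner_eq_tsum, lp.inner_eq_tsum]
        apply tsum_congr; intro i
        rw [diagL_apply, diagL_apply, star_eq_adjoint]
        exact (ContinuousLinearMap.adjoint_inner_left c (z i) (w i)).symm
      rw [e]
      exact (Submodule.mem_orthogonal _ _).1 hzorth _ (hinv (star c) (hAstar c hc) w hw)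
    have := Submodule.disjoint_def.mp V.orthogonal_disjoint _ h1 h2
    exact this
  have hz0 : z = 0 := by
    apply Subtype.ext; funext i
    have hzi : ∀ a ∈ N, (star a) ((z : ∀ _ : ι, H) i) = 0 := by
      intro a ha
      have h := hdz (star a) (Submodule.subset_span (hstar a ha))
      have h2 := congrFun (congrArg (fun u : lp (fun _ : ι => H) 2 => (u : ∀ _ : ι, H)) h) i
      simpa [diagL_apply, lp.coeFn_zero] using h2
    have : (z : ∀ _ : ι, H) i = 0 := by
      apply hnd
      intro a ha v
      calc (inner ℂ (a v) ((z : ∀ _ : ι, H) i) : ℂ)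
          = inner ℂ v ((ContinuousLinearMap.adjoint a) ((z : ∀ _ : ι, H) i)) :=
            (ContinuousLinearMap.adjoint_inner_right a v _).symm
        _ = 0 := by rw [← star_eq_adjoint, hzi a ha, inner_zero_right]
    simpa using this
  have hXV : X ∈ V := by
    have : X = PX := by rwa [← sub_eq_zero]
    rw [this]; exact (V.orthogonalProjectionOnto X).2
  have hXcl : X ∈ closure (V₀ : Set (lp (fun _ : ι => H) 2)) := by
    rwa [← Submodule.topologicalClosure_coe, SetLike.mem_coe]
  obtain ⟨g, hgV₀, hdist⟩ := Metric.mem_closure_iff.1 hXcl (Real.sqrt ε) (Real.sqrt_pos.2 hε)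
  obtain ⟨c, hcA, rfl⟩ := Submodule.mem_map.1 hgV₀
  refine ⟨c, hcA, ?_, ?_⟩
  · have he : (fun i => ‖c (x i) - x i‖ ^ 2) = fun i => ‖(Psi c - X) i‖ ^ 2 := by
      funext i; rw [lp.coeFn_sub]; rfl
    rw [he]; exact lp2_summable _
  · have he : (fun i => ‖c (x i) - x i‖ ^ 2) = fun i => ‖(Psi c - X) i‖ ^ 2 := by
      funext i; rw [lp.coeFn_sub]; rfl
    have h1 : ∑' i, ‖c (x i) - x i‖ ^ 2 = ‖Psi c - X‖ ^ 2 := by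
      rw [lp2_normsq]; exact tsum_congr fun i => congrFun he i
    rw [h1]
    have h2 : ‖Psi c - X‖ < Real.sqrt ε := by
      rw [← dist_eq_norm, dist_comm]; exact hdist
    calc ‖Psi c - X‖ ^ 2 < Real.sqrt ε ^ 2 :=
          pow_lt_pow_left₀ h2 (norm_nonneg _) (by norm_num)
      _ = ε := Real.sq_sqrt hε.le

lemma mul_le_weighted {a b δ : ℝ} (ha : 0 ≤ a) (hb : 0 ≤ b) (hδ : 0 < δ) :
    a * b ≤ (δ * a ^ 2 + b ^ 2 / δ) / 2 := by
  have key : a * b ≤ (δ ^ 2 * a ^ 2 + b ^ 2) / (2 * δ) := by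
    rw [le_div_iff₀ (by positivity)]
    nlinarith [sq_nonneg (δ * a - b)]
  calc a * b ≤ (δ ^ 2 * a ^ 2 + b ^ 2) / (2 * δ) := key
    _ = (δ * a ^ 2 + b ^ 2 / δ) / 2 := by field_simp

lemma summable_inner_seq (T : H →L[ℂ] K) {x : ℕ → H} {y : ℕ → K}
    (hx : Summable fun n => ‖x n‖ ^ 2) (hy : Summable fun n => ‖y n‖ ^ 2) :
    Summable fun n => (inner ℂ (y n) (T (x n)) : ℂ) := by
  apply Summable.of_norm_bounded ((hy.add (summable_op_sq T hx)).div_const 2)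
  intro n
  calc ‖(inner ℂ (y n) (T (x n)) : ℂ)‖ ≤ ‖y n‖ * ‖T (x n)‖ := norm_inner_le_norm _ _
    _ ≤ (‖y n‖ ^ 2 + ‖T (x n)‖ ^ 2) / 2 := by nlinarith [sq_nonneg (‖y n‖ - ‖T (x n)‖)]

lemma mem_wspan_core' (N : Set (H →L[ℂ] H))
    (hmul : ∀ a ∈ N, ∀ b ∈ N, a * b ∈ N)
    (hstar : ∀ a ∈ N, star a ∈ N)
    (hnd : ∀ z : H, (∀ a ∈ N, ∀ v : H, (inner ℂ (a v) z : ℂ) = 0) → z = 0)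
    (b : H →L[ℂ] H) (hb : ∀ n ∈ N, n * b ∈ N) :
    b ∈ @closure _ (sigmaWeak H H) ((Submodule.span ℂ N : Submodule ℂ (H →L[ℂ] H)) : Set _) := by
  have hmulb : ∀ u ∈ Submodule.span ℂ N, u * b ∈ Submodule.span ℂ N := by
    intro u hu
    induction hu using Submodule.span_induction with
    | mem y hy => exact Submodule.subset_span (hb y hy)
    | zero => rw [zero_mul]; exact Submodule.zero_mem _
    | add y z _ _ ihy ihz => rw [add_mul]; exact Submodule.add_mem _ ihy ihz
    | smul r y _ ih => rw [smul_mul_assoc]; exact Submodule.smul_mem _ r ih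
  apply mem_wclosure_of
  intro I ε hε
  set Y2 : SWP H H → ℝ := fun p => ∑' n, ‖p.val.2 n‖ ^ 2 with hY2def
  have hY2 : ∀ p, 0 ≤ Y2 p := fun p => tsum_nonneg fun n => by positivity
  rcases I.eq_empty_or_nonempty with hI | hI
  · exact ⟨0, Submodule.zero_mem _, by simp [hI]⟩
  · set δ := I.inf' hI (fun p => min 1 (2 * ε p / (Y2 p + 1))) with hδdef
    have hδpos : 0 < δ := by
      rw [hδdef, Finset.lt_inf'_iff]
      intro p hp
      apply lt_min one_pos
      apply div_pos (by linarith [hε p hp]) (by linarith [hY2 p])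
    let xv : ({p : SWP H H // p ∈ I} × ℕ) → H := fun q => b (q.1.val.val.1 q.2)
    have hxv : Summable fun q => ‖xv q‖ ^ 2 := by
      rw [summable_prod_of_nonneg (fun q => by positivity)]
      refine ⟨fun p => summable_op_sq b p.val.prop.1, Summable.of_finite⟩
    obtain ⟨c, hcA, hcsummable, hcsum⟩ :=
      approx_lemma N hmul hstar hnd xv hxv (show (0:ℝ) < δ ^ 2 by positivity)
    refine ⟨c * b, hmulb c hcA, ?_⟩
    intro p hp
    set w : ℕ → H := fun n => c (b (p.val.1 n)) - b (p.val.1 n) with hwdef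
    have hwsl : Summable fun n => ‖w n‖ ^ 2 := by
      have := hcsummable.prod_factor ⟨p, hp⟩
      exact this
    have houter : Summable fun q : {p : SWP H H // p ∈ I} =>
        ∑' n, ‖c (xv (q, n)) - xv (q, n)‖ ^ 2 := Summable.of_finite
    have hWlt : ∑' n, ‖w n‖ ^ 2 < δ ^ 2 := by
      have hslice : ∑' n, ‖w n‖ ^ 2 ≤ ∑' q, ‖c (xv q) - xv q‖ ^ 2 := by
        rw [hcsummable.tsum_prod]
        exact houter.le_tsum ⟨p, hp⟩ fun q _ => tsum_nonneg fun n => by positivity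
      exact lt_of_le_of_lt hslice hcsum
    have hsum1 : Summable fun n => (inner ℂ (p.val.2 n) ((c * b) (p.val.1 n)) : ℂ) :=
      summable_inner_seq (c * b) p.prop.1 p.prop.2
    have hsum2 : Summable fun n => (inner ℂ (p.val.2 n) (b (p.val.1 n)) : ℂ) :=
      summable_inner_seq b p.prop.1 p.prop.2
    have hdiff : swfun p (c * b) - swfun p b = ∑' n, (inner ℂ (p.val.2 n) (w n) : ℂ) := by
      rw [show swfun p (c * b) = ∑' n, (inner ℂ (p.val.2 n) ((c * b) (p.val.1 n)) : ℂ) from rfl,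
        show swfun p b = ∑' n, (inner ℂ (p.val.2 n) (b (p.val.1 n)) : ℂ) from rfl,
        ← hsum1.tsum_sub hsum2]
      apply tsum_congr; intro n
      rw [hwdef, ← inner_sub_right]
      rfl
    rw [hdiff]
    have hyw : Summable fun n => ‖p.val.2 n‖ * ‖w n‖ := by
      apply Summable.of_nonneg_of_le (fun n => by positivity) _ ((p.prop.2.add hwsl).div_const 2)
      intro n
      nlinarith [sq_nonneg (‖p.val.2 n‖ - ‖w n‖), norm_nonneg (p.val.2 n), norm_nonneg (w n)]
    have hinnersum : Summable fun n => ‖(inner ℂ (p.val.2 n) (w n) : ℂ)‖ :=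
      Summable.of_nonneg_of_le (fun n => by positivity)
        (fun n => norm_inner_le_norm _ _) hyw
    have h1 : ‖∑' n, (inner ℂ (p.val.2 n) (w n) : ℂ)‖ ≤ ∑' n, ‖p.val.2 n‖ * ‖w n‖ := by
      calc ‖∑' n, (inner ℂ (p.val.2 n) (w n) : ℂ)‖ ≤ ∑' n, ‖(inner ℂ (p.val.2 n) (w n) : ℂ)‖ :=
            norm_tsum_le_tsum_norm hinnersum
        _ ≤ ∑' n, ‖p.val.2 n‖ * ‖w n‖ :=
            Summable.tsum_le_tsum (fun n => norm_inner_le_norm _ _) hinnersum hyw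
    have hrhs : Summable fun n => (δ * ‖p.val.2 n‖ ^ 2 + ‖w n‖ ^ 2 / δ) / 2 :=
      ((p.prop.2.mul_left δ).add (hwsl.div_const δ)).div_const 2
    have h2 : ∑' n, ‖p.val.2 n‖ * ‖w n‖ ≤ (δ * Y2 p + (∑' n, ‖w n‖ ^ 2) / δ) / 2 := by
      calc ∑' n, ‖p.val.2 n‖ * ‖w n‖
          ≤ ∑' n, (δ * ‖p.val.2 n‖ ^ 2 + ‖w n‖ ^ 2 / δ) / 2 :=
            Summable.tsum_le_tsum (fun n => mul_le_weighted (norm_nonneg _) (norm_nonneg _) hδpos)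
              hyw hrhs
        _ = (δ * Y2 p + (∑' n, ‖w n‖ ^ 2) / δ) / 2 := by
            rw [tsum_div_const, Summable.tsum_add ((p.prop.2).mul_left δ) (hwsl.div_const δ),
              tsum_mul_left, tsum_div_const]
    have h3 : (δ * Y2 p + (∑' n, ‖w n‖ ^ 2) / δ) / 2 < (δ * Y2 p + δ) / 2 := by
      have : (∑' n, ‖w n‖ ^ 2) / δ < δ := by
        rw [div_lt_iff₀ hδpos]
        calc ∑' n, ‖w n‖ ^ 2 < δ ^ 2 := hWlt
          _ = δ * δ := sq δ
      linarith
    have h4 : (δ * Y2 p + δ) / 2 ≤ ε p := by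
      have hδle : δ ≤ 2 * ε p / (Y2 p + 1) :=
        le_trans (Finset.inf'_le _ hp) (min_le_right _ _)
      have h5 : δ * (Y2 p + 1) ≤ 2 * ε p := by
        rw [← le_div_iff₀ (by linarith [hY2 p] : (0:ℝ) < Y2 p + 1)]
        exact hδle
      nlinarith
    calc ‖∑' n, (inner ℂ (p.val.2 n) (w n) : ℂ)‖ ≤ ∑' n, ‖p.val.2 n‖ * ‖w n‖ := h1
      _ ≤ (δ * Y2 p + (∑' n, ‖w n‖ ^ 2) / δ) / 2 := h2
      _ < (δ * Y2 p + δ) / 2 := h3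
      _ ≤ ε p := h4


-- ### commutant and essentiality lemmas

def seq2 {α : Type*} [Zero α] (u v : α) : ℕ → α :=
  fun n => if n = 0 then u else if n = 1 then v else 0

lemma summable_seq2 (u v : H) : Summable fun n => ‖seq2 u v n‖ ^ 2 := by
  apply summable_of_ne_finset_zero (s := {0, 1})
  intro n hn
  simp only [Finset.mem_insert, Finset.mem_singleton, not_or] at hn
  simp [seq2, hn.1, hn.2]

def pairSWP (s : H →L[ℂ] H) (x y : H) : SWP H H :=
  ⟨(seq2 x (s x), seq2 (ContinuousLinearMap.adjoint s y) (-y)),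
    summable_seq2 _ _, summable_seq2 _ _⟩

lemma swfun_pairSWP (s : H →L[ℂ] H) (x y : H) (T : H →L[ℂ] H) :
    swfun (pairSWP s x y) T =
      (inner ℂ (ContinuousLinearMap.adjoint s y) (T x) : ℂ) - inner ℂ y (T (s x)) := by
  have h : swfun (pairSWP s x y) T =
      ∑' n, (inner ℂ (seq2 (ContinuousLinearMap.adjoint s y) (-y) n)
        (T (seq2 x (s x) n)) : ℂ) := rfl
  rw [h, tsum_eq_sum (s := {0, 1}) ?h0]
  · rw [Finset.sum_pair (by norm_num : (0:ℕ) ≠ 1)]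
    simp [seq2, inner_neg_left, sub_eq_add_neg]
  · intro n hn
    simp only [Finset.mem_insert, Finset.mem_singleton, not_or] at hn
    simp [seq2, hn.1, hn.2]

lemma commutant_isClosed (S : Set (H →L[ℂ] H)) :
    @IsClosed _ (sigmaWeak H H) (commutantS S) := by
  have hset : commutantS S =
      ⋂ s ∈ S, ⋂ (x : H), ⋂ (y : H), swfun (pairSWP s x y) ⁻¹' {0} := by
    ext T
    simp only [Set.mem_iInter, Set.mem_preimage, Set.mem_singleton_iff, commutantS,
      Set.mem_setOf_eq]
    constructor
    · intro h s hs x y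
      rw [swfun_pairSWP, ContinuousLinearMap.adjoint_inner_left]
      have h2 := DFunLike.congr_fun (h s hs) x
      simp only [ContinuousLinearMap.mul_apply] at h2
      rw [h2, sub_self]
    · intro h s hs
      ext x
      apply ext_inner_left ℂ
      intro y
      have h2 := h s hs x y
      rw [swfun_pairSWP, ContinuousLinearMap.adjoint_inner_left, sub_eq_zero] at h2
      simpa [ContinuousLinearMap.mul_apply] using h2
  rw [hset]
  letI := sigmaWeak H H
  exact isClosed_biInter fun s _ => isClosed_iInter fun x => isClosed_iInter fun y =>
    IsClosed.preimage (continuous_swfun _) isClosed_singleton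

def commodule (S : Set (H →L[ℂ] H)) : Submodule ℂ (H →L[ℂ] H) where
  carrier := commutantS S
  add_mem' := fun {a b} ha hb s hs => by rw [mul_add, add_mul, ha s hs, hb s hs]
  zero_mem' := fun s hs => by rw [mul_zero, zero_mul]
  smul_mem' := fun r a ha s hs => by rw [mul_smul_comm, smul_mul_assoc, ha s hs]

lemma wspan_subset_of (N : Set (H →L[ℂ] K)) (C : Submodule ℂ (H →L[ℂ] K))
    (hcl : @IsClosed _ (sigmaWeak H K) (C : Set (H →L[ℂ] K))) (hNC : N ⊆ C) :
    wspan N ⊆ C := by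
  unfold wspan
  letI := sigmaWeak H K
  exact closure_minimal (SetLike.coe_subset_coe.2 (Submodule.span_le.2 hNC)) hcl

lemma mem_wspan_core (N : Set (H →L[ℂ] H))
    (hmul : ∀ a ∈ N, ∀ b ∈ N, a * b ∈ N)
    (hstar : ∀ a ∈ N, star a ∈ N)
    (hnd : ∀ z : H, (∀ a ∈ N, ∀ v : H, (inner ℂ (a v) z : ℂ) = 0) → z = 0)
    (b : H →L[ℂ] H) (hb : ∀ n ∈ N, n * b ∈ N) :
    b ∈ wspan N := by
  unfold wspan
  exact mem_wspan_core' N hmul hstar hnd b hb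

lemma dense_of_opMap_one {U : Set (H →L[ℂ] K)} (h : opMap U 1 = 1) :
    ∀ η : K, (∀ T ∈ U, ∀ ξ : H, (inner ℂ (T ξ) η : ℂ) = 0) → η = 0 := by
  intro η hη
  set S : Set K := {y | ∃ T ∈ U, ∃ ξ : H, T ((1 : H →L[ℂ] H) ξ) = y} with hS
  set W := (Submodule.span ℂ S).topologicalClosure with hW
  have hmem : ∀ v : K, v ∈ W := by
    intro v
    have h1 := DFunLike.congr_fun h v
    rw [ContinuousLinearMap.one_apply] at h1
    rw [← h1]
    have h2 : opMap U (1 : H →L[ℂ] H) v ∈ W := by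
      simp only [opMap, projOntoClosure, ContinuousLinearMap.coe_comp', Function.comp_apply,
        Submodule.subtypeL_apply]
      exact Submodule.coe_mem _
    exact h2
  have horto : η ∈ (Submodule.span ℂ S)ᗮ := by
    rw [Submodule.mem_orthogonal]
    intro u hu
    induction hu using Submodule.span_induction with
    | mem y hy =>
        obtain ⟨T, hT, ξ, hξ⟩ := hy
        rw [← hξ]
        simpa using hη T hT ξ
    | zero => exact inner_zero_left _
    | add y z _ _ ihy ihz => rw [inner_add_left, ihy, ihz, add_zero]
    | smul r y _ ih => rw [inner_smul_left, ih, mul_zero]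
  have hWsub : W ≤ (Submodule.span ℂ S)ᗮᗮ :=
    Submodule.topologicalClosure_minimal _ (Submodule.le_orthogonal_orthogonal _)
      (Submodule.isClosed_orthogonal _)
  have h0 : (inner ℂ η η : ℂ) = 0 :=
    (Submodule.mem_orthogonal _ _).1 (hWsub (hmem η)) η horto
  exact inner_self_eq_zero.1 h0

lemma adj_intertwine {T : H →L[ℂ] K} {L : H →L[ℂ] H} {Q : K →L[ℂ] K}
    (hL : star L = L) (hQ : star Q = Q) (h : T.comp L = Q.comp T) :
    L.comp (ContinuousLinearMap.adjoint T) = (ContinuousLinearMap.adjoint T).comp Q := by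
  have h2 := congrArg ContinuousLinearMap.adjoint h
  rw [ContinuousLinearMap.adjoint_comp, ContinuousLinearMap.adjoint_comp] at h2
  have eL : ContinuousLinearMap.adjoint L = L := by
    rw [← ContinuousLinearMap.star_eq_adjoint, hL]
  have eQ : ContinuousLinearMap.adjoint Q = Q := by
    rw [← ContinuousLinearMap.star_eq_adjoint, hQ]
  rw [eL, eQ] at h2
  exact h2

end Lem22Aux

/-- **Lemma 2.2.** If `S₁`, `S₂` are sets of projections, `χ : S₁ → S₂` is onto and
`M = {T : TL = χ(L)T for all L ∈ S₁}`, then `M` is a reflexive TRO; and if `M` is essential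
then `span(M*M)^{-w*} = S₁′` and `span(MM*)^{-w*} = S₂′`. -/
theorem stmt1 {H₁ : Type*} {H₂ : Type*}
    [NormedAddCommGroup H₁] [InnerProductSpace ℂ H₁] [CompleteSpace H₁]
    [NormedAddCommGroup H₂] [InnerProductSpace ℂ H₂] [CompleteSpace H₂]
    (S₁ : Set (H₁ →L[ℂ] H₁)) (S₂ : Set (H₂ →L[ℂ] H₂))
    (hS₁ : ∀ P ∈ S₁, IsProjOp P) (hS₂ : ∀ P ∈ S₂, IsProjOp P)
    (χ : (H₁ →L[ℂ] H₁) → (H₂ →L[ℂ] H₂)) (hχ : χ '' S₁ = S₂)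
    (M : Set (H₁ →L[ℂ] H₂))
    (hM : M = {T : H₁ →L[ℂ] H₂ | ∀ L ∈ S₁, T.comp L = (χ L).comp T}) :
    (IsTRO M ∧ RefHull M = M) ∧
    (IsEssential M →
      wspan (mulSet (adjSet M) M) = commutantS S₁ ∧
      wspan (mulSet M (adjSet M)) = commutantS S₂) := by
  subst hM
  set M : Set (H₁ →L[ℂ] H₂) := {T : H₁ →L[ℂ] H₂ | ∀ L ∈ S₁, T.comp L = (χ L).comp T} with hMdef
  have hQmem : ∀ L ∈ S₁, χ L ∈ S₂ := fun L hL => hχ ▸ Set.mem_image_of_mem χ hL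
  have hTL : ∀ T ∈ M, ∀ L ∈ S₁, ∀ ξ : H₁, T (L ξ) = χ L (T ξ) := by
    intro T hT L hL ξ
    have h := DFunLike.congr_fun (hT L hL) ξ
    simpa using h
  have hadjL : ∀ T ∈ M, ∀ L ∈ S₁, ∀ v : H₂,
      L (ContinuousLinearMap.adjoint T v) = ContinuousLinearMap.adjoint T (χ L v) := by
    intro T hT L hL v
    have h := adj_intertwine (hS₁ L hL).2 (hS₂ _ (hQmem L hL)).2 (hT L hL)
    have h2 := DFunLike.congr_fun h v
    simpa using h2
  have hQapp : ∀ L ∈ S₁, ∀ v : H₂, χ L (χ L v) = χ L v := by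
    intro L hL v
    have h := DFunLike.congr_fun (hS₂ _ (hQmem L hL)).1 v
    simpa [ContinuousLinearMap.mul_apply] using h
  -- the TRO inclusion
  have htro : mulSet (mulSet M (adjSet M)) M ⊆ M := by
    rintro _ ⟨_, ⟨t, ht, _, ⟨s, hs, rfl⟩, rfl⟩, r, hr, rfl⟩
    intro L hL
    ext ξ
    simp only [ContinuousLinearMap.comp_apply]
    rw [hTL r hr L hL ξ, ← hadjL s hs L hL (r ξ), hTL t ht L hL _]
  -- membership helpers
  have hN₁mem : ∀ S ∈ M, ∀ T ∈ M,
      (ContinuousLinearMap.adjoint S).comp T ∈ mulSet (adjSet M) M := by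
    intro S hS T hT
    exact ⟨ContinuousLinearMap.adjoint S, ⟨S, hS, rfl⟩, T, hT, rfl⟩
  have hN₂mem : ∀ T ∈ M, ∀ S ∈ M,
      T.comp (ContinuousLinearMap.adjoint S) ∈ mulSet M (adjSet M) := by
    intro T hT S hS
    exact ⟨T, hT, ContinuousLinearMap.adjoint S, ⟨S, hS, rfl⟩, rfl⟩
  constructor
  · constructor
    · -- IsTRO
      refine ⟨⟨{ carrier := M
                 add_mem' := ?_
                 zero_mem' := ?_
                 smul_mem' := ?_ }, rfl⟩, htro⟩
      · intro a b ha hb L hL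
        ext ξ
        have h1 := DFunLike.congr_fun (ha L hL) ξ
        have h2 := DFunLike.congr_fun (hb L hL) ξ
        simp only [ContinuousLinearMap.comp_apply] at h1 h2 ⊢
        simp only [ContinuousLinearMap.add_apply, map_add, h1, h2]
      · intro L hL
        ext ξ
        simp
      · intro r a ha L hL
        ext ξ
        have h1 := DFunLike.congr_fun (ha L hL) ξ
        simp only [ContinuousLinearMap.comp_apply] at h1 ⊢
        simp only [ContinuousLinearMap.smul_apply, map_smul, h1]
    · -- RefHull M = M
      apply Set.Subset.antisymm
      · intro T hT
        intro L hL
        ext ξ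
        simp only [ContinuousLinearMap.comp_apply]
        have hstepA : χ L (T (L ξ)) = T (L ξ) := by
          have hmemA := hT (L ξ)
          have hsub : ((fun S : H₁ →L[ℂ] H₂ => S (L ξ)) '' M : Set H₂) ⊆
              (LinearMap.ker ((χ L - 1 : H₂ →L[ℂ] H₂) : H₂ →ₗ[ℂ] H₂) : Set H₂) := by
            rintro _ ⟨S, hS', rfl⟩
            simp only [SetLike.mem_coe, LinearMap.mem_ker, ContinuousLinearMap.coe_coe,
              ContinuousLinearMap.sub_apply, ContinuousLinearMap.one_apply, sub_eq_zero]
            rw [hTL S hS' L hL ξ]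
            exact hQapp L hL _
          have hcl : closure ((Submodule.span ℂ ((fun S : H₁ →L[ℂ] H₂ => S (L ξ)) '' M) :
              Submodule ℂ H₂) : Set H₂) ⊆ (LinearMap.ker ((χ L - 1 : H₂ →L[ℂ] H₂) : H₂ →ₗ[ℂ] H₂) : Set H₂) := by
            apply closure_minimal _ (ContinuousLinearMap.isClosed_ker _)
            exact_mod_cast Submodule.span_le.2 hsub
          have h3 := hcl hmemA
          simp only [SetLike.mem_coe, LinearMap.mem_ker, ContinuousLinearMap.coe_coe,
            ContinuousLinearMap.sub_apply, ContinuousLinearMap.one_apply, sub_eq_zero] at h3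
          exact h3
        have hstepB : χ L (T (ξ - L ξ)) = 0 := by
          have hmemB := hT (ξ - L ξ)
          have hsub : ((fun S : H₁ →L[ℂ] H₂ => S (ξ - L ξ)) '' M : Set H₂) ⊆
              (LinearMap.ker ((χ L : H₂ →L[ℂ] H₂) : H₂ →ₗ[ℂ] H₂) : Set H₂) := by
            rintro _ ⟨S, hS', rfl⟩
            simp only [SetLike.mem_coe, LinearMap.mem_ker, ContinuousLinearMap.coe_coe]
            rw [map_sub, map_sub, hTL S hS' L hL ξ, hQapp L hL, sub_self]
          have hcl : closure ((Submodule.span ℂ ((fun S : H₁ →L[ℂ] H₂ => S (ξ - L ξ)) '' M) :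
              Submodule ℂ H₂) : Set H₂) ⊆ (LinearMap.ker ((χ L : H₂ →L[ℂ] H₂) : H₂ →ₗ[ℂ] H₂) : Set H₂) := by
            apply closure_minimal _ (ContinuousLinearMap.isClosed_ker _)
            exact_mod_cast Submodule.span_le.2 hsub
          have h3 := hcl hmemB
          simpa only [SetLike.mem_coe, LinearMap.mem_ker, ContinuousLinearMap.coe_coe] using h3
        have hdec : T ξ = T (L ξ) + T (ξ - L ξ) := by
          rw [← map_add]
          congr 1
          abel
        rw [hdec, map_add, hstepA, hstepB, add_zero]
      · intro T hT ξ
        exact subset_closure (Submodule.subset_span (Set.mem_image_of_mem _ hT))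
  · -- essential case
    rintro ⟨hE1, hE2⟩
    have hD1 : ∀ η : H₂, (∀ T ∈ M, ∀ ξ : H₁, (inner ℂ (T ξ) η : ℂ) = 0) → η = 0 :=
      dense_of_opMap_one hE1
    have hD2 : ∀ z : H₁,
        (∀ T ∈ M, ∀ η : H₂, (inner ℂ (ContinuousLinearMap.adjoint T η) z : ℂ) = 0) → z = 0 := by
      intro z hz
      apply dense_of_opMap_one hE2 z
      rintro _ ⟨T, hT, rfl⟩ η
      exact hz T hT η
    constructor
    · -- wspan (M* M) = S₁'
      apply Set.Subset.antisymm
      · apply wspan_subset_of _ (commodule S₁) (commutant_isClosed S₁)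
        rintro _ ⟨_, ⟨S, hS, rfl⟩, T, hT, rfl⟩
        intro L hL
        ext ξ
        simp only [ContinuousLinearMap.mul_apply, ContinuousLinearMap.comp_apply]
        rw [hTL T hT L hL ξ, hadjL S hS L hL (T ξ)]
      · intro a ha
        apply mem_wspan_core
        · rintro _ ⟨_, ⟨S, hS, rfl⟩, T, hT, rfl⟩ _ ⟨_, ⟨U, hU, rfl⟩, Vv, hV, rfl⟩
          have e : ((ContinuousLinearMap.adjoint S).comp T) *
              ((ContinuousLinearMap.adjoint U).comp Vv) =
              (ContinuousLinearMap.adjoint S).comp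
                ((T.comp (ContinuousLinearMap.adjoint U)).comp Vv) := by
            ext ξ; rfl
          rw [e]
          exact hN₁mem S hS _ (htro ⟨T.comp (ContinuousLinearMap.adjoint U),
            ⟨T, hT, ContinuousLinearMap.adjoint U, ⟨U, hU, rfl⟩, rfl⟩, Vv, hV, rfl⟩)
        · rintro _ ⟨_, ⟨S, hS, rfl⟩, T, hT, rfl⟩
          have e : star ((ContinuousLinearMap.adjoint S).comp T) =
              (ContinuousLinearMap.adjoint T).comp S := by
            rw [ContinuousLinearMap.star_eq_adjoint, ContinuousLinearMap.adjoint_comp,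
              ContinuousLinearMap.adjoint_adjoint]
          rw [e]
          exact hN₁mem T hT S hS
        · intro z hz
          have hSz : ∀ S ∈ M, S z = 0 := by
            intro S hS
            apply hD1 (S z)
            intro T hT ξ
            have h := hz ((ContinuousLinearMap.adjoint S).comp T) (hN₁mem S hS T hT) ξ
            rwa [ContinuousLinearMap.comp_apply, ContinuousLinearMap.adjoint_inner_left] at h
          apply hD2 z
          intro T hT η
          rw [ContinuousLinearMap.adjoint_inner_left, hSz T hT, inner_zero_right]
        · rintro _ ⟨_, ⟨S, hS, rfl⟩, T, hT, rfl⟩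
          have hTa : T.comp a ∈ M := by
            intro L hL
            ext ξ
            simp only [ContinuousLinearMap.comp_apply]
            have h1 := DFunLike.congr_fun (ha L hL) ξ
            simp only [ContinuousLinearMap.mul_apply] at h1
            rw [← h1, hTL T hT L hL (a ξ)]
          have e : ((ContinuousLinearMap.adjoint S).comp T) * a =
              (ContinuousLinearMap.adjoint S).comp (T.comp a) := by
            ext ξ; rfl
          rw [e]
          exact hN₁mem S hS _ hTa
    · -- wspan (M M*) = S₂'
      apply Set.Subset.antisymm
      · apply wspan_subset_of _ (commodule S₂) (commutant_isClosed S₂)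
        rintro _ ⟨T, hT, _, ⟨S, hS, rfl⟩, rfl⟩
        intro s hs
        rw [← hχ] at hs
        obtain ⟨L, hL, rfl⟩ := hs
        ext ξ
        simp only [ContinuousLinearMap.mul_apply, ContinuousLinearMap.comp_apply]
        rw [← hTL T hT L hL _, hadjL S hS L hL ξ]
      · intro b hb
        have hbstar : ∀ s ∈ S₂, s * star b = star b * s := by
          intro s hs
          have h1 := congrArg star (hb s hs)
          rw [star_mul, star_mul, (hS₂ s hs).2] at h1
          exact h1.symm
        apply mem_wspan_core
        · rintro _ ⟨T, hT, _, ⟨S, hS, rfl⟩, rfl⟩ _ ⟨U, hU, _, ⟨Vv, hV, rfl⟩, rfl⟩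
          have e : (T.comp (ContinuousLinearMap.adjoint S)) *
              (U.comp (ContinuousLinearMap.adjoint Vv)) =
              ((T.comp (ContinuousLinearMap.adjoint S)).comp U).comp
                (ContinuousLinearMap.adjoint Vv) := by
            ext ξ; rfl
          rw [e]
          exact ⟨(T.comp (ContinuousLinearMap.adjoint S)).comp U,
            htro ⟨T.comp (ContinuousLinearMap.adjoint S),
              ⟨T, hT, ContinuousLinearMap.adjoint S, ⟨S, hS, rfl⟩, rfl⟩, U, hU, rfl⟩,
            ContinuousLinearMap.adjoint Vv, ⟨Vv, hV, rfl⟩, rfl⟩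
        · rintro _ ⟨T, hT, _, ⟨S, hS, rfl⟩, rfl⟩
          have e : star (T.comp (ContinuousLinearMap.adjoint S)) =
              S.comp (ContinuousLinearMap.adjoint T) := by
            rw [ContinuousLinearMap.star_eq_adjoint, ContinuousLinearMap.adjoint_comp,
              ContinuousLinearMap.adjoint_adjoint]
          rw [e]
          exact hN₂mem S hS T hT
        · intro z hz
          have hTz : ∀ T ∈ M, ContinuousLinearMap.adjoint T z = 0 := by
            intro T hT
            apply hD2 (ContinuousLinearMap.adjoint T z)
            intro S hS η
            have h := hz (T.comp (ContinuousLinearMap.adjoint S)) (hN₂mem T hT S hS) η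
            rw [ContinuousLinearMap.comp_apply] at h
            have e := ContinuousLinearMap.adjoint_inner_left (ContinuousLinearMap.adjoint T)
              z (ContinuousLinearMap.adjoint S η)
            rw [ContinuousLinearMap.adjoint_adjoint] at e
            rw [e] at h
            exact h
          apply hD1 z
          intro T hT ξ
          have e := ContinuousLinearMap.adjoint_inner_left (ContinuousLinearMap.adjoint T) z ξ
          rw [ContinuousLinearMap.adjoint_adjoint] at e
          rw [e, hTz T hT, inner_zero_right]
        · rintro _ ⟨T, hT, _, ⟨S, hS, rfl⟩, rfl⟩
          have hMb : (ContinuousLinearMap.adjoint b).comp S ∈ M := by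
            intro L hL
            ext ξ
            simp only [ContinuousLinearMap.comp_apply]
            have h1 := DFunLike.congr_fun (hbstar (χ L) (hQmem L hL)) (S ξ)
            simp only [ContinuousLinearMap.mul_apply,
              ContinuousLinearMap.star_eq_adjoint] at h1
            rw [hTL S hS L hL ξ, ← h1]
          have e : (T.comp (ContinuousLinearMap.adjoint S)) * b =
              T.comp (ContinuousLinearMap.adjoint
                ((ContinuousLinearMap.adjoint b).comp S)) := by
            rw [ContinuousLinearMap.adjoint_comp, ContinuousLinearMap.adjoint_adjoint]
            ext ξ; rfl
          rw [e]
          exact hN₂mem T hT _ hMb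
end
end

section
/- TRO equivalence is an equivalence relation on w*-closed operator algebras. In particular, if A ⊆ B(H₁), B ⊆ B(H₂), C ⊆ B(H₃) are w*-closed algebras such that A is TRO equivalent to B and B is TRO equivalent to C, then A is TRO equivalent to C. -/
noncomputable section

open ContinuousLinearMap

universe u v w

set_option linter.unusedSectionVars false

section AuxTop

variable {H : Type u} {K : Type v} {L : Type w}
variable [NormedAddCommGroup H] [InnerProductSpace ℂ H] [CompleteSpace H]
variable [NormedAddCommGroup K] [InnerProductSpace ℂ K] [CompleteSpace K]
variable [NormedAddCommGroup L] [InnerProductSpace ℂ L] [CompleteSpace L]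

/-- Type synonym for `H →L[ℂ] K` carrying the σ-weak topology. -/
def SW (H : Type u) (K : Type v) [NormedAddCommGroup H] [InnerProductSpace ℂ H]
    [NormedAddCommGroup K] [InnerProductSpace ℂ K] : Type (max u v) := H →L[ℂ] K

instance : AddCommGroup (SW H K) := inferInstanceAs (AddCommGroup (H →L[ℂ] K))
instance : Module ℂ (SW H K) := inferInstanceAs (Module ℂ (H →L[ℂ] K))
instance instTopSW : TopologicalSpace (SW H K) := sigmaWeak H K

/-- Reinterpret an element of `SW H K` as an operator. -/
def SW.op (T : SW H K) : H →L[ℂ] K := T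

/-- Reinterpret an operator as an element of `SW H K`. -/
def SW.mk (T : H →L[ℂ] K) : SW H K := T

lemma topSW_eq : (instTopSW : TopologicalSpace (SW H K)) =
    ⨅ (x : ℕ → H) (y : ℕ → K) (_ : Summable fun n => ‖x n‖ ^ 2)
      (_ : Summable fun n => ‖y n‖ ^ 2),
      TopologicalSpace.induced (fun T : SW H K => ∑' n, (inner ℂ (y n) (SW.op T (x n)) : ℂ))
        inferInstance := rfl

lemma summable_inner_apply {x : ℕ → H} {y : ℕ → K} (hx : Summable fun n => ‖x n‖ ^ 2)
    (hy : Summable fun n => ‖y n‖ ^ 2) (T : H →L[ℂ] K) :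
    Summable fun n => (inner ℂ (y n) (SW.op T (x n)) : ℂ) := by
  have hb : ∀ n, ‖(inner ℂ (y n) (SW.op T (x n)) : ℂ)‖ ≤ (‖y n‖ ^ 2 + ‖T‖ ^ 2 * ‖x n‖ ^ 2) / 2 := by
    intro n
    have h1 : ‖(inner ℂ (y n) (SW.op T (x n)) : ℂ)‖ ≤ ‖y n‖ * ‖T (x n)‖ := norm_inner_le_norm _ _
    have h2 : ‖T (x n)‖ ≤ ‖T‖ * ‖x n‖ := T.le_opNorm _
    have h3 : ‖y n‖ * ‖T (x n)‖ ≤ ‖y n‖ * (‖T‖ * ‖x n‖) :=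
      mul_le_mul_of_nonneg_left h2 (norm_nonneg _)
    have h4 : 2 * ‖y n‖ * (‖T‖ * ‖x n‖) ≤ ‖y n‖ ^ 2 + (‖T‖ * ‖x n‖) ^ 2 :=
      two_mul_le_add_sq _ _
    nlinarith [norm_nonneg (y n), norm_nonneg (x n), norm_nonneg T]
  refine Summable.of_norm (Summable.of_nonneg_of_le (fun n => norm_nonneg _) hb ?_)
  exact ((hy.add (hx.mul_left (‖T‖ ^ 2))).div_const 2)

lemma continuous_phiSW {x : ℕ → H} {y : ℕ → K} (hx : Summable fun n => ‖x n‖ ^ 2)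
    (hy : Summable fun n => ‖y n‖ ^ 2) :
    Continuous (fun T : SW H K => ∑' n, (inner ℂ (y n) (SW.op T (x n)) : ℂ)) := by
  rw [continuous_iff_le_induced, topSW_eq]
  exact iInf_le_of_le x <| iInf_le_of_le y <| iInf_le_of_le hx <| iInf_le _ hy

lemma continuousSW_rng {X : Type*} [TopologicalSpace X] {f : X → SW H K}
    (h : ∀ (x : ℕ → H) (y : ℕ → K), (Summable fun n => ‖x n‖ ^ 2) →
      (Summable fun n => ‖y n‖ ^ 2) →
      Continuous fun a => ∑' n, (inner ℂ (y n) (SW.op (f a) (x n)) : ℂ)) : Continuous f := by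
  rw [show (instTopSW : TopologicalSpace (SW H K)) = _ from topSW_eq]
  refine continuous_iInf_rng.mpr fun x => continuous_iInf_rng.mpr fun y =>
    continuous_iInf_rng.mpr fun hx => continuous_iInf_rng.mpr fun hy =>
    continuous_induced_rng.mpr ?_
  exact h x y hx hy

lemma summable_sq_norm_apply {y : ℕ → H} (hy : Summable fun n => ‖y n‖ ^ 2)
    (e : H →L[ℂ] K) : Summable fun n => ‖e (y n)‖ ^ 2 := by
  refine Summable.of_nonneg_of_le (fun n => by positivity) (fun n => ?_)
    (hy.mul_left (‖e‖ ^ 2))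
  calc ‖e (y n)‖ ^ 2 ≤ (‖e‖ * ‖y n‖) ^ 2 := by
        have := e.le_opNorm (y n)
        have := norm_nonneg (e (y n))
        nlinarith [norm_nonneg (y n), e.opNorm_nonneg]
    _ = ‖e‖ ^ 2 * ‖y n‖ ^ 2 := by ring

instance : ContinuousAdd (SW H K) := by
  refine ⟨continuousSW_rng fun x y hx hy => ?_⟩
  have heq : (fun p : SW H K × SW H K => ∑' n, (inner ℂ (y n) (SW.op (p.1 + p.2) (x n)) : ℂ))
      = fun p => (∑' n, (inner ℂ (y n) (SW.op p.1 (x n)) : ℂ))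
        + ∑' n, (inner ℂ (y n) (SW.op p.2 (x n)) : ℂ) := by
    funext p
    rw [← Summable.tsum_add (f := fun n => (inner ℂ (y n) (SW.op p.1 (x n)) : ℂ)) (g := fun n => (inner ℂ (y n) (SW.op p.2 (x n)) : ℂ)) (summable_inner_apply hx hy _) (summable_inner_apply hx hy _)]
    congr 1; funext n
    rw [show SW.op (p.1 + p.2) = SW.op p.1 + SW.op p.2 from rfl]
    simp [inner_add_right]
  rw [heq]
  exact ((continuous_phiSW hx hy).comp continuous_fst).add
    ((continuous_phiSW hx hy).comp continuous_snd)

instance : ContinuousConstSMul ℂ (SW H K) := by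
  refine ⟨fun c => continuousSW_rng fun x y hx hy => ?_⟩
  have heq : (fun T : SW H K => ∑' n, (inner ℂ (y n) (SW.op (c • T) (x n)) : ℂ))
      = fun T => c * ∑' n, (inner ℂ (y n) (SW.op T (x n)) : ℂ) := by
    funext T
    rw [← tsum_mul_left]
    congr 1; funext n
    rw [show SW.op (c • T) = c • SW.op T from rfl]
    simp [inner_smul_right]
  rw [heq]
  exact continuous_const.mul (continuous_phiSW hx hy)

lemma continuousSW_lcomp (e : K →L[ℂ] L) :
    Continuous (fun T : SW H K => SW.mk (e.comp (SW.op T))) := by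
  refine continuousSW_rng (X := SW H K) (H := H) (K := L) fun x y hx hy => ?_
  have heq : (fun T : SW H K =>
        ∑' n, (inner ℂ (y n) (SW.op (SW.mk (e.comp (SW.op T))) (x n)) : ℂ))
      = fun T : SW H K =>
        ∑' n, (inner ℂ ((ContinuousLinearMap.adjoint e) (y n)) (SW.op T (x n)) : ℂ) := by
    funext T; congr 1; funext n
    exact (ContinuousLinearMap.adjoint_inner_left e (SW.op T (x n)) (y n)).symm
  rw [heq]
  exact continuous_phiSW hx (summable_sq_norm_apply hy _)

lemma continuousSW_rcomp (e : H →L[ℂ] K) :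
    Continuous (fun T : SW K L => SW.mk ((SW.op T).comp e)) := by
  refine continuousSW_rng (X := SW K L) (H := H) (K := L) fun x y hx hy => ?_
  exact continuous_phiSW (x := fun n => e (x n)) (summable_sq_norm_apply hx _) hy

lemma continuousSW_adjoint :
    Continuous (fun T : SW H K => SW.mk (ContinuousLinearMap.adjoint (SW.op T))) := by
  refine continuousSW_rng (X := SW H K) (H := K) (K := H) fun x y hx hy => ?_
  have heq : (fun T : SW H K =>
        ∑' n, (inner ℂ (y n) (SW.op (SW.mk (ContinuousLinearMap.adjoint (SW.op T))) (x n)) : ℂ))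
      = fun T : SW H K =>
        (starRingEnd ℂ) (∑' n, (inner ℂ (x n) (SW.op T (y n)) : ℂ)) := by
    funext T
    rw [show ((starRingEnd ℂ) (∑' n, (inner ℂ (x n) (SW.op T (y n)) : ℂ)))
        = ∑' n, (starRingEnd ℂ) (inner ℂ (x n) (SW.op T (y n)) : ℂ) from tsum_star]
    congr 1; funext n
    rw [inner_conj_symm]
    exact (ContinuousLinearMap.adjoint_inner_right (SW.op T) (y n) (x n))
  rw [heq]
  exact Complex.continuous_conj.comp (continuous_phiSW hy hx)

lemma wspan_eq (S : Set (SW H K)) :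
    wspan S = closure (↑(Submodule.span ℂ S) : Set (SW H K)) := rfl

lemma subset_wspan (S : Set (SW H K)) : S ⊆ wspan S := fun s hs => by
  rw [wspan_eq]
  exact subset_closure (Submodule.subset_span hs)

lemma wspan_mono {S T : Set (SW H K)} (h : S ⊆ T) : wspan S ⊆ wspan T := by
  rw [wspan_eq, wspan_eq]
  exact closure_mono (Submodule.span_mono h)

lemma wspan_le {S T : Set (SW H K)} (h : S ⊆ wspan T) : wspan S ⊆ wspan T := by
  rw [wspan_eq] at h ⊢
  rw [wspan_eq]
  rw [← Submodule.topologicalClosure_coe] at h ⊢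
  have h2 : Submodule.span ℂ S ≤ (Submodule.span ℂ T).topologicalClosure :=
    Submodule.span_le.mpr h
  calc closure (↑(Submodule.span ℂ S) : Set (SW H K))
      ⊆ closure ↑(Submodule.span ℂ T).topologicalClosure := closure_mono h2
    _ = ↑(Submodule.span ℂ T).topologicalClosure :=
        (Submodule.isClosed_topologicalClosure _).closure_eq

lemma wspan_wspan (S : Set (SW H K)) : wspan (wspan S) = wspan S :=
  Set.Subset.antisymm (wspan_le (le_refl _)) (wspan_mono (subset_wspan S))

lemma wspan_span (S : Set (SW H K)) :
    wspan (↑(Submodule.span ℂ S) : Set (SW H K)) = wspan S :=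
  Set.Subset.antisymm
    (wspan_le fun u hu => by rw [wspan_eq]; exact subset_closure hu)
    (wspan_mono Submodule.subset_span)

end AuxTop

section AuxSets
variable {H : Type u} {K : Type v} {L : Type w} {E : Type u'}
variable [NormedAddCommGroup H] [InnerProductSpace ℂ H] [CompleteSpace H]
variable [NormedAddCommGroup K] [InnerProductSpace ℂ K] [CompleteSpace K]
variable [NormedAddCommGroup L] [InnerProductSpace ℂ L] [CompleteSpace L]
variable [NormedAddCommGroup E] [InnerProductSpace ℂ E] [CompleteSpace E]

lemma mem_mulSet {X : Set (K →L[ℂ] L)} {Y : Set (H →L[ℂ] K)} {a : K →L[ℂ] L}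
    {b : H →L[ℂ] K} (ha : a ∈ X) (hb : b ∈ Y) : a.comp b ∈ mulSet X Y :=
  Set.mem_image2_of_mem ha hb

lemma mulSet_mono {X X' : Set (K →L[ℂ] L)} {Y Y' : Set (H →L[ℂ] K)}
    (hX : X ⊆ X') (hY : Y ⊆ Y') : mulSet X Y ⊆ mulSet X' Y' :=
  Set.image2_subset hX hY

lemma mulSet_assoc (X : Set (L →L[ℂ] E)) (Y : Set (K →L[ℂ] L)) (Z : Set (H →L[ℂ] K)) :
    mulSet (mulSet X Y) Z = mulSet X (mulSet Y Z) := by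
  apply Set.ext; intro T
  constructor
  · rintro ⟨_, ⟨a, ha, b, hb, rfl⟩, c, hc, rfl⟩
    exact ⟨a, ha, b.comp c, mem_mulSet hb hc, rfl⟩
  · rintro ⟨a, ha, _, ⟨b, hb, c, hc, rfl⟩, rfl⟩
    exact ⟨a.comp b, mem_mulSet ha hb, c, hc, rfl⟩

lemma adjSet_adjSet (S : Set (H →L[ℂ] K)) : adjSet (adjSet S) = S := by
  apply Set.ext; intro T
  constructor
  · rintro ⟨_, ⟨a, ha, rfl⟩, rfl⟩
    beta_reduce
    rwa [ContinuousLinearMap.adjoint_adjoint]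
  · intro hT
    exact ⟨ContinuousLinearMap.adjoint T, ⟨T, hT, rfl⟩,
      ContinuousLinearMap.adjoint_adjoint T⟩

lemma adjSet_mono {S T : Set (H →L[ℂ] K)} (h : S ⊆ T) : adjSet S ⊆ adjSet T :=
  Set.image_mono h

lemma adjSet_mulSet (X : Set (K →L[ℂ] L)) (Y : Set (H →L[ℂ] K)) :
    adjSet (mulSet X Y) = mulSet (adjSet Y) (adjSet X) := by
  apply Set.ext; intro T
  constructor
  · rintro ⟨_, ⟨a, ha, b, hb, rfl⟩, rfl⟩
    exact ⟨ContinuousLinearMap.adjoint b, ⟨b, hb, rfl⟩, ContinuousLinearMap.adjoint a,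
      ⟨a, ha, rfl⟩, (ContinuousLinearMap.adjoint_comp a b).symm⟩
  · rintro ⟨_, ⟨b, hb, rfl⟩, _, ⟨a, ha, rfl⟩, rfl⟩
    exact ⟨a.comp b, mem_mulSet ha hb, ContinuousLinearMap.adjoint_comp a b⟩

lemma comp_smul' (a : K →L[ℂ] L) (c : ℂ) (u : H →L[ℂ] K) :
    a.comp (c • u) = c • a.comp u := by
  ext ξ; simp

lemma mulSet_span_right (X : Set (K →L[ℂ] L)) (Y : Set (H →L[ℂ] K)) :
    mulSet X (↑(Submodule.span ℂ Y) : Set (H →L[ℂ] K))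
      ⊆ (↑(Submodule.span ℂ (mulSet X Y)) : Set (H →L[ℂ] L)) := by
  rintro _ ⟨a, ha, b, hb, rfl⟩
  induction hb using Submodule.span_induction with
  | mem _ h => exact Submodule.subset_span (mem_mulSet ha h)
  | zero => simpa using Submodule.zero_mem _
  | add u v _ _ hu hv => beta_reduce; rw [ContinuousLinearMap.comp_add]; exact Submodule.add_mem _ hu hv
  | smul c u _ hu => beta_reduce; rw [comp_smul']; exact Submodule.smul_mem _ c hu

lemma mulSet_span_left (X : Set (K →L[ℂ] L)) (Y : Set (H →L[ℂ] K)) :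
    mulSet (↑(Submodule.span ℂ X) : Set (K →L[ℂ] L)) Y
      ⊆ (↑(Submodule.span ℂ (mulSet X Y)) : Set (H →L[ℂ] L)) := by
  rintro _ ⟨a, ha, b, hb, rfl⟩
  induction ha using Submodule.span_induction with
  | mem _ h => exact Submodule.subset_span (mem_mulSet h hb)
  | zero => simpa using Submodule.zero_mem _
  | add u v _ _ hu hv => beta_reduce; rw [ContinuousLinearMap.add_comp]; exact Submodule.add_mem _ hu hv
  | smul c u _ hu => beta_reduce; rw [ContinuousLinearMap.smul_comp]; exact Submodule.smul_mem _ c hu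

lemma adjSet_span (S : Set (H →L[ℂ] K)) :
    adjSet (↑(Submodule.span ℂ S) : Set (H →L[ℂ] K))
      ⊆ (↑(Submodule.span ℂ (adjSet S)) : Set (K →L[ℂ] H)) := by
  rintro _ ⟨u, hu, rfl⟩
  induction hu using Submodule.span_induction with
  | mem _ h => exact Submodule.subset_span ⟨_, h, rfl⟩
  | zero => simpa using Submodule.zero_mem _
  | add u v _ _ hu hv => beta_reduce; rw [map_add]; exact Submodule.add_mem _ hu hv
  | smul c u _ hu =>
      beta_reduce
      rw [show ContinuousLinearMap.adjoint (c • u)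
          = (starRingEnd ℂ c) • ContinuousLinearMap.adjoint u from map_smulₛₗ _ c u]
      exact Submodule.smul_mem _ _ hu

end AuxSets

section AuxW
variable {H : Type u} {K : Type v} {L : Type w}
variable [NormedAddCommGroup H] [InnerProductSpace ℂ H] [CompleteSpace H]
variable [NormedAddCommGroup K] [InnerProductSpace ℂ K] [CompleteSpace K]
variable [NormedAddCommGroup L] [InnerProductSpace ℂ L] [CompleteSpace L]

lemma mulSet_wspan_right (X : Set (K →L[ℂ] L)) (Y : Set (H →L[ℂ] K)) :
    mulSet X (wspan Y) ⊆ wspan (mulSet X Y) := by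
  rintro _ ⟨a, ha, b, hb, rfl⟩
  have himg : (fun T : SW H K => SW.mk (a.comp (SW.op T))) '' (wspan Y)
      ⊆ wspan (mulSet X Y) := by
    rw [wspan_eq Y, wspan_eq (mulSet X Y)]
    refine (image_closure_subset_closure_image (continuousSW_lcomp a)).trans
      (closure_mono ?_)
    rintro _ ⟨v, hv, rfl⟩
    exact mulSet_span_right X Y ⟨a, ha, v, hv, rfl⟩
  exact himg ⟨b, hb, rfl⟩

lemma mulSet_wspan_left (X : Set (K →L[ℂ] L)) (Y : Set (H →L[ℂ] K)) :
    mulSet (wspan X) Y ⊆ wspan (mulSet X Y) := by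
  rintro _ ⟨a, ha, b, hb, rfl⟩
  have himg : (fun T : SW K L => SW.mk ((SW.op T).comp b)) '' (wspan X)
      ⊆ wspan (mulSet X Y) := by
    rw [wspan_eq X, wspan_eq (mulSet X Y)]
    refine (image_closure_subset_closure_image (continuousSW_rcomp b)).trans
      (closure_mono ?_)
    rintro _ ⟨v, hv, rfl⟩
    exact mulSet_span_left X Y ⟨v, hv, b, hb, rfl⟩
  exact himg ⟨a, ha, rfl⟩

lemma adjSet_wspan (S : Set (H →L[ℂ] K)) : adjSet (wspan S) ⊆ wspan (adjSet S) := by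
  rintro _ ⟨u, hu, rfl⟩
  have himg : (fun T : SW H K => SW.mk (ContinuousLinearMap.adjoint (SW.op T))) '' (wspan S)
      ⊆ wspan (adjSet S) := by
    rw [wspan_eq S, wspan_eq (adjSet S)]
    refine (image_closure_subset_closure_image continuousSW_adjoint).trans
      (closure_mono ?_)
    rintro _ ⟨v, hv, rfl⟩
    exact adjSet_span S ⟨v, hv, rfl⟩
  exact himg ⟨u, hu, rfl⟩

lemma wspan_mul_w_right (X : Set (K →L[ℂ] L)) (Y : Set (H →L[ℂ] K)) :
    wspan (mulSet X (wspan Y)) = wspan (mulSet X Y) :=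
  Set.Subset.antisymm (wspan_le (mulSet_wspan_right X Y))
    (wspan_mono (mulSet_mono (le_refl X) (subset_wspan Y)))

lemma wspan_mul_w_left (X : Set (K →L[ℂ] L)) (Y : Set (H →L[ℂ] K)) :
    wspan (mulSet (wspan X) Y) = wspan (mulSet X Y) :=
  Set.Subset.antisymm (wspan_le (mulSet_wspan_left X Y))
    (wspan_mono (mulSet_mono (subset_wspan X) (le_refl Y)))

lemma wspan_mul_mono_right (X : Set (K →L[ℂ] L)) {Y Y' : Set (H →L[ℂ] K)}
    (h : wspan Y ⊆ wspan Y') : wspan (mulSet X Y) ⊆ wspan (mulSet X Y') := by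
  refine le_trans ?_ (wspan_mul_w_right X Y').le
  exact wspan_mono (mulSet_mono (le_refl X) ((subset_wspan Y).trans h))

lemma wspan_mul_mono_left {X X' : Set (K →L[ℂ] L)} (Y : Set (H →L[ℂ] K))
    (h : wspan X ⊆ wspan X') : wspan (mulSet X Y) ⊆ wspan (mulSet X' Y) := by
  refine le_trans ?_ (wspan_mul_w_left X' Y).le
  exact wspan_mono (mulSet_mono ((subset_wspan X).trans h) (le_refl Y))

lemma wspan_mul_congr_right (X : Set (K →L[ℂ] L)) {Y Y' : Set (H →L[ℂ] K)}
    (h : wspan Y = wspan Y') : wspan (mulSet X Y) = wspan (mulSet X Y') :=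
  Set.Subset.antisymm (wspan_mul_mono_right X h.le) (wspan_mul_mono_right X h.ge)

lemma wspan_mul_congr_left {X X' : Set (K →L[ℂ] L)} (Y : Set (H →L[ℂ] K))
    (h : wspan X = wspan X') : wspan (mulSet X Y) = wspan (mulSet X' Y) :=
  Set.Subset.antisymm (wspan_mul_mono_left Y h.le) (wspan_mul_mono_left Y h.ge)

lemma wspan_mul_span_left (X : Set (K →L[ℂ] L)) (Y : Set (H →L[ℂ] K)) :
    wspan (mulSet (↑(Submodule.span ℂ X) : Set (K →L[ℂ] L)) Y) = wspan (mulSet X Y) :=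
  wspan_mul_congr_left Y (wspan_span X)

lemma wspan_mul_span_right (X : Set (K →L[ℂ] L)) (Y : Set (H →L[ℂ] K)) :
    wspan (mulSet X (↑(Submodule.span ℂ Y) : Set (H →L[ℂ] K))) = wspan (mulSet X Y) :=
  wspan_mul_congr_right X (wspan_span Y)

end AuxW

section Words
variable {H₁ : Type u} {H₂ : Type v} {H₃ : Type w}
variable [NormedAddCommGroup H₁] [InnerProductSpace ℂ H₁] [CompleteSpace H₁]
variable [NormedAddCommGroup H₂] [InnerProductSpace ℂ H₂] [CompleteSpace H₂]
variable [NormedAddCommGroup H₃] [InnerProductSpace ℂ H₃] [CompleteSpace H₃]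

variable (M₁ : Set (H₁ →L[ℂ] H₂)) (M₂ : Set (H₂ →L[ℂ] H₃))

/-- The product TRO generator `X = M₂ M₁`. -/
def Xset : Set (H₁ →L[ℂ] H₃) := mulSet M₂ M₁

/-- Alternating words `(X X*)ⁿ X`. -/
def ww : ℕ → Set (H₁ →L[ℂ] H₃)
  | 0 => Xset M₁ M₂
  | n + 1 => mulSet (mulSet (Xset M₁ M₂) (adjSet (Xset M₁ M₂))) (ww n)

lemma ww_zero : ww M₁ M₂ 0 = Xset M₁ M₂ := rfl

lemma ww_succ (n : ℕ) : ww M₁ M₂ (n + 1)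
    = mulSet (mulSet (Xset M₁ M₂) (adjSet (Xset M₁ M₂))) (ww M₁ M₂ n) := rfl

lemma ww_alt (n : ℕ) : ww M₁ M₂ (n + 1)
    = mulSet (ww M₁ M₂ n) (mulSet (adjSet (Xset M₁ M₂)) (Xset M₁ M₂)) := by
  induction n with
  | zero => rw [ww_succ, ww_zero, mulSet_assoc]
  | succ n ih =>
      calc ww M₁ M₂ (n + 2)
          = mulSet (mulSet (Xset M₁ M₂) (adjSet (Xset M₁ M₂))) (ww M₁ M₂ (n + 1)) :=
            ww_succ M₁ M₂ _
        _ = mulSet (mulSet (Xset M₁ M₂) (adjSet (Xset M₁ M₂)))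
              (mulSet (ww M₁ M₂ n) (mulSet (adjSet (Xset M₁ M₂)) (Xset M₁ M₂))) := by rw [ih]
        _ = mulSet (mulSet (mulSet (Xset M₁ M₂) (adjSet (Xset M₁ M₂))) (ww M₁ M₂ n))
              (mulSet (adjSet (Xset M₁ M₂)) (Xset M₁ M₂)) := (mulSet_assoc _ _ _).symm
        _ = mulSet (ww M₁ M₂ (n + 1)) (mulSet (adjSet (Xset M₁ M₂)) (Xset M₁ M₂)) := by
            rw [← ww_succ]

lemma adj_ww_succ (n : ℕ) : adjSet (ww M₁ M₂ (n + 1))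
    = mulSet (mulSet (adjSet (Xset M₁ M₂)) (Xset M₁ M₂)) (adjSet (ww M₁ M₂ n)) := by
  rw [ww_alt, adjSet_mulSet, adjSet_mulSet, adjSet_adjSet]

lemma ww_W1 (m k : ℕ) : mulSet (adjSet (ww M₁ M₂ m)) (ww M₁ M₂ k)
    = mulSet (adjSet (Xset M₁ M₂)) (ww M₁ M₂ (m + k)) := by
  induction m generalizing k with
  | zero => rw [ww_zero, Nat.zero_add]
  | succ m ih =>
      calc mulSet (adjSet (ww M₁ M₂ (m + 1))) (ww M₁ M₂ k)
          = mulSet (mulSet (mulSet (adjSet (Xset M₁ M₂)) (Xset M₁ M₂)) (adjSet (ww M₁ M₂ m)))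
              (ww M₁ M₂ k) := by rw [adj_ww_succ]
        _ = mulSet (mulSet (adjSet (Xset M₁ M₂)) (Xset M₁ M₂))
              (mulSet (adjSet (ww M₁ M₂ m)) (ww M₁ M₂ k)) := mulSet_assoc _ _ _
        _ = mulSet (mulSet (adjSet (Xset M₁ M₂)) (Xset M₁ M₂))
              (mulSet (adjSet (Xset M₁ M₂)) (ww M₁ M₂ (m + k))) := by rw [ih]
        _ = mulSet (adjSet (Xset M₁ M₂)) (mulSet (Xset M₁ M₂)
              (mulSet (adjSet (Xset M₁ M₂)) (ww M₁ M₂ (m + k)))) := mulSet_assoc _ _ _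
        _ = mulSet (adjSet (Xset M₁ M₂)) (mulSet (mulSet (Xset M₁ M₂) (adjSet (Xset M₁ M₂)))
              (ww M₁ M₂ (m + k))) := by rw [mulSet_assoc]
        _ = mulSet (adjSet (Xset M₁ M₂)) (ww M₁ M₂ (m + k + 1)) := by rw [← ww_succ]
        _ = mulSet (adjSet (Xset M₁ M₂)) (ww M₁ M₂ (m + 1 + k)) := by
            rw [show m + k + 1 = m + 1 + k by omega]

lemma ww_W2 (a t : ℕ) : mulSet (ww M₁ M₂ a)
    (mulSet (adjSet (Xset M₁ M₂)) (ww M₁ M₂ t)) = ww M₁ M₂ (a + t + 1) := by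
  induction a generalizing t with
  | zero =>
      calc mulSet (ww M₁ M₂ 0) (mulSet (adjSet (Xset M₁ M₂)) (ww M₁ M₂ t))
          = mulSet (Xset M₁ M₂) (mulSet (adjSet (Xset M₁ M₂)) (ww M₁ M₂ t)) := by rw [ww_zero]
        _ = mulSet (mulSet (Xset M₁ M₂) (adjSet (Xset M₁ M₂))) (ww M₁ M₂ t) :=
            (mulSet_assoc _ _ _).symm
        _ = ww M₁ M₂ (t + 1) := (ww_succ M₁ M₂ t).symm
        _ = ww M₁ M₂ (0 + t + 1) := by rw [Nat.zero_add]
  | succ a ih =>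
      calc mulSet (ww M₁ M₂ (a + 1)) (mulSet (adjSet (Xset M₁ M₂)) (ww M₁ M₂ t))
          = mulSet (mulSet (mulSet (Xset M₁ M₂) (adjSet (Xset M₁ M₂))) (ww M₁ M₂ a))
              (mulSet (adjSet (Xset M₁ M₂)) (ww M₁ M₂ t)) := by rw [ww_succ]
        _ = mulSet (mulSet (Xset M₁ M₂) (adjSet (Xset M₁ M₂)))
              (mulSet (ww M₁ M₂ a) (mulSet (adjSet (Xset M₁ M₂)) (ww M₁ M₂ t))) :=
            mulSet_assoc _ _ _
        _ = mulSet (mulSet (Xset M₁ M₂) (adjSet (Xset M₁ M₂))) (ww M₁ M₂ (a + t + 1)) := by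
            rw [ih]
        _ = ww M₁ M₂ (a + t + 1 + 1) := (ww_succ M₁ M₂ _).symm
        _ = ww M₁ M₂ (a + 1 + t + 1) := by rw [show a + t + 1 + 1 = a + 1 + t + 1 by omega]

lemma ww_W3 (a b c : ℕ) : mulSet (mulSet (ww M₁ M₂ a) (adjSet (ww M₁ M₂ b))) (ww M₁ M₂ c)
    = ww M₁ M₂ (a + b + c + 1) := by
  rw [mulSet_assoc, ww_W1, ww_W2, show a + (b + c) + 1 = a + b + c + 1 by omega]

/-- The union of all alternating words. -/
def Uset : Set (H₁ →L[ℂ] H₃) := ⋃ n, ww M₁ M₂ n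

/-- The TRO generated by `M₂ M₁`. -/
def Mset : Set (H₁ →L[ℂ] H₃) := ↑(Submodule.span ℂ (Uset M₁ M₂))

lemma span_mul_span {H K L : Type*}
    [NormedAddCommGroup H] [InnerProductSpace ℂ H] [CompleteSpace H]
    [NormedAddCommGroup K] [InnerProductSpace ℂ K] [CompleteSpace K]
    [NormedAddCommGroup L] [InnerProductSpace ℂ L] [CompleteSpace L]
    (S : Set (K →L[ℂ] L)) (T : Set (H →L[ℂ] K)) :
    mulSet (↑(Submodule.span ℂ S) : Set (K →L[ℂ] L))
      (↑(Submodule.span ℂ T) : Set (H →L[ℂ] K))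
      ⊆ (↑(Submodule.span ℂ (mulSet S T)) : Set (H →L[ℂ] L)) := by
  refine (mulSet_span_left _ _).trans ?_
  exact SetLike.coe_subset_coe.mpr (Submodule.span_le.mpr (mulSet_span_right S T))

lemma Uset_mul : mulSet (mulSet (Uset M₁ M₂) (adjSet (Uset M₁ M₂))) (Uset M₁ M₂)
    ⊆ Uset M₁ M₂ := by
  rintro _ ⟨_, ⟨u₁, hu₁, u₂, hu₂, rfl⟩, u₃, hu₃, rfl⟩
  obtain ⟨w, hw, rfl⟩ := hu₂
  obtain ⟨a, ha⟩ := Set.mem_iUnion.mp hu₁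
  obtain ⟨b, hb⟩ := Set.mem_iUnion.mp hw
  obtain ⟨c, hc⟩ := Set.mem_iUnion.mp hu₃
  have : (u₁.comp (ContinuousLinearMap.adjoint w)).comp u₃
      ∈ mulSet (mulSet (ww M₁ M₂ a) (adjSet (ww M₁ M₂ b))) (ww M₁ M₂ c) :=
    mem_mulSet (mem_mulSet ha ⟨w, hb, rfl⟩) hc
  rw [ww_W3] at this
  exact Set.mem_iUnion.mpr ⟨a + b + c + 1, this⟩

lemma isTRO_Mset : IsTRO (Mset M₁ M₂) := by
  constructor
  · exact ⟨Submodule.span ℂ (Uset M₁ M₂), rfl⟩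
  · have h1 : adjSet (Mset M₁ M₂)
        ⊆ (↑(Submodule.span ℂ (adjSet (Uset M₁ M₂))) : Set (H₃ →L[ℂ] H₁)) :=
      adjSet_span _
    have h2 : mulSet (mulSet (Mset M₁ M₂) (adjSet (Mset M₁ M₂))) (Mset M₁ M₂)
        ⊆ mulSet (mulSet (↑(Submodule.span ℂ (Uset M₁ M₂)))
            (↑(Submodule.span ℂ (adjSet (Uset M₁ M₂))))) (↑(Submodule.span ℂ (Uset M₁ M₂))) :=
      mulSet_mono (mulSet_mono (le_refl _) h1) (le_refl _)
    refine h2.trans ?_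
    have h3 := mulSet_mono (span_mul_span (Uset M₁ M₂) (adjSet (Uset M₁ M₂)))
      (le_refl (↑(Submodule.span ℂ (Uset M₁ M₂)) : Set (H₁ →L[ℂ] H₃)))
    refine h3.trans ?_
    refine (span_mul_span _ _).trans ?_
    refine SetLike.coe_subset_coe.mpr (Submodule.span_le.mpr ?_)
    exact (Uset_mul M₁ M₂).trans (Submodule.subset_span)

end Words

section Main
variable {H₁ : Type u} {H₂ : Type v} {H₃ : Type w} {D : Type u'}
variable [NormedAddCommGroup H₁] [InnerProductSpace ℂ H₁] [CompleteSpace H₁]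
variable [NormedAddCommGroup H₂] [InnerProductSpace ℂ H₂] [CompleteSpace H₂]
variable [NormedAddCommGroup H₃] [InnerProductSpace ℂ H₃] [CompleteSpace H₃]
variable [NormedAddCommGroup D] [InnerProductSpace ℂ D] [CompleteSpace D]
variable (M₁ : Set (H₁ →L[ℂ] H₂)) (M₂ : Set (H₂ →L[ℂ] H₃))
variable (A : Set (H₁ →L[ℂ] H₁)) (B : Set (H₂ →L[ℂ] H₂)) (C : Set (H₃ →L[ℂ] H₃))

lemma FB1 (hB1 : B = wspan (mulSet (mulSet M₁ A) (adjSet M₁)))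
    (hT1 : mulSet (mulSet M₁ (adjSet M₁)) M₁ ⊆ M₁) (Z : Set (D →L[ℂ] H₂)) :
    wspan (mulSet M₁ (mulSet (adjSet M₁) (mulSet B Z))) ⊆ wspan (mulSet B Z) := by
  have hBe : wspan B = wspan (mulSet (mulSet M₁ A) (adjSet M₁)) := by rw [hB1]; exact wspan_wspan _
  have e1 : wspan (mulSet M₁ (mulSet (adjSet M₁) (mulSet B Z)))
      = wspan (mulSet M₁ (mulSet (adjSet M₁)
          (mulSet (mulSet (mulSet M₁ A) (adjSet M₁)) Z))) :=
    wspan_mul_congr_right _ (wspan_mul_congr_right _ (wspan_mul_congr_left _ hBe))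
  rw [e1]
  refine wspan_le ?_
  have h1 : mulSet M₁ (mulSet (adjSet M₁) (mulSet (mulSet (mulSet M₁ A) (adjSet M₁)) Z))
      = mulSet (mulSet (mulSet M₁ (adjSet M₁)) M₁) (mulSet A (mulSet (adjSet M₁) Z)) := by
    simp only [mulSet_assoc]
  rw [h1]
  refine (mulSet_mono hT1 (le_refl (mulSet A (mulSet (adjSet M₁) Z)))).trans ?_
  have h3 : mulSet M₁ (mulSet A (mulSet (adjSet M₁) Z))
      = mulSet (mulSet (mulSet M₁ A) (adjSet M₁)) Z := by simp only [mulSet_assoc]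
  rw [h3]
  refine (mulSet_mono (show mulSet (mulSet M₁ A) (adjSet M₁) ⊆ B by
    rw [hB1]; exact subset_wspan _) (le_refl Z)).trans ?_
  exact subset_wspan _

lemma FB2 (hB2 : B = wspan (mulSet (mulSet (adjSet M₂) C) M₂))
    (hT2 : mulSet (mulSet M₂ (adjSet M₂)) M₂ ⊆ M₂) (Z : Set (D →L[ℂ] H₂)) :
    wspan (mulSet (adjSet M₂) (mulSet M₂ (mulSet B Z))) ⊆ wspan (mulSet B Z) := by
  have hT2' : mulSet (adjSet M₂) (mulSet M₂ (adjSet M₂)) ⊆ adjSet M₂ := by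
    have h := adjSet_mono hT2
    rw [adjSet_mulSet, adjSet_mulSet, adjSet_adjSet] at h
    exact h
  have hBe : wspan B = wspan (mulSet (mulSet (adjSet M₂) C) M₂) := by rw [hB2]; exact wspan_wspan _
  have e1 : wspan (mulSet (adjSet M₂) (mulSet M₂ (mulSet B Z)))
      = wspan (mulSet (adjSet M₂) (mulSet M₂
          (mulSet (mulSet (mulSet (adjSet M₂) C) M₂) Z))) :=
    wspan_mul_congr_right _ (wspan_mul_congr_right _ (wspan_mul_congr_left _ hBe))
  rw [e1]
  refine wspan_le ?_
  have h1 : mulSet (adjSet M₂) (mulSet M₂ (mulSet (mulSet (mulSet (adjSet M₂) C) M₂) Z))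
      = mulSet (mulSet (mulSet (adjSet M₂) (mulSet M₂ (adjSet M₂))) C) (mulSet M₂ Z) := by
    simp only [mulSet_assoc]
  rw [h1]
  refine (mulSet_mono (mulSet_mono hT2' (le_refl C)) (le_refl (mulSet M₂ Z))).trans ?_
  have h3 : mulSet (mulSet (adjSet M₂) C) (mulSet M₂ Z)
      = mulSet (mulSet (mulSet (adjSet M₂) C) M₂) Z := by simp only [mulSet_assoc]
  rw [h3]
  refine (mulSet_mono (show mulSet (mulSet (adjSet M₂) C) M₂ ⊆ B by
    rw [hB2]; exact subset_wspan _) (le_refl Z)).trans ?_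
  exact subset_wspan _

lemma FB3 (hB1 : B = wspan (mulSet (mulSet M₁ A) (adjSet M₁)))
    (hT1 : mulSet (mulSet M₁ (adjSet M₁)) M₁ ⊆ M₁) (Z : Set (D →L[ℂ] H₂)) :
    wspan (mulSet B (mulSet M₁ (mulSet (adjSet M₁) Z))) ⊆ wspan (mulSet B Z) := by
  have hT1' : mulSet (adjSet M₁) (mulSet M₁ (adjSet M₁)) ⊆ adjSet M₁ := by
    have h := adjSet_mono hT1
    rw [adjSet_mulSet, adjSet_mulSet, adjSet_adjSet] at h
    exact h
  have hBe : wspan B = wspan (mulSet (mulSet M₁ A) (adjSet M₁)) := by rw [hB1]; exact wspan_wspan _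
  have e1 : wspan (mulSet B (mulSet M₁ (mulSet (adjSet M₁) Z)))
      = wspan (mulSet (mulSet (mulSet M₁ A) (adjSet M₁))
          (mulSet M₁ (mulSet (adjSet M₁) Z))) :=
    wspan_mul_congr_left _ hBe
  rw [e1]
  refine wspan_le ?_
  have h1 : mulSet (mulSet (mulSet M₁ A) (adjSet M₁)) (mulSet M₁ (mulSet (adjSet M₁) Z))
      = mulSet (mulSet M₁ A) (mulSet (mulSet (adjSet M₁) (mulSet M₁ (adjSet M₁))) Z) := by
    simp only [mulSet_assoc]
  rw [h1]
  refine (mulSet_mono (le_refl (mulSet M₁ A)) (mulSet_mono hT1' (le_refl Z))).trans ?_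
  have h3 : mulSet (mulSet M₁ A) (mulSet (adjSet M₁) Z)
      = mulSet (mulSet (mulSet M₁ A) (adjSet M₁)) Z := by simp only [mulSet_assoc]
  rw [h3]
  refine (mulSet_mono (show mulSet (mulSet M₁ A) (adjSet M₁) ⊆ B by
    rw [hB1]; exact subset_wspan _) (le_refl Z)).trans ?_
  exact subset_wspan _

lemma FB4 (hB2 : B = wspan (mulSet (mulSet (adjSet M₂) C) M₂))
    (hT2 : mulSet (mulSet M₂ (adjSet M₂)) M₂ ⊆ M₂) (Z : Set (D →L[ℂ] H₂)) :
    wspan (mulSet B (mulSet (adjSet M₂) (mulSet M₂ Z))) ⊆ wspan (mulSet B Z) := by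
  have hT2r : mulSet M₂ (mulSet (adjSet M₂) M₂) ⊆ M₂ := by rwa [← mulSet_assoc]
  have hBe : wspan B = wspan (mulSet (mulSet (adjSet M₂) C) M₂) := by rw [hB2]; exact wspan_wspan _
  have e1 : wspan (mulSet B (mulSet (adjSet M₂) (mulSet M₂ Z)))
      = wspan (mulSet (mulSet (mulSet (adjSet M₂) C) M₂)
          (mulSet (adjSet M₂) (mulSet M₂ Z))) :=
    wspan_mul_congr_left _ hBe
  rw [e1]
  refine wspan_le ?_
  have h1 : mulSet (mulSet (mulSet (adjSet M₂) C) M₂) (mulSet (adjSet M₂) (mulSet M₂ Z))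
      = mulSet (mulSet (adjSet M₂) C) (mulSet (mulSet M₂ (mulSet (adjSet M₂) M₂)) Z) := by
    simp only [mulSet_assoc]
  rw [h1]
  refine (mulSet_mono (le_refl (mulSet (adjSet M₂) C)) (mulSet_mono hT2r (le_refl Z))).trans ?_
  have h3 : mulSet (mulSet (adjSet M₂) C) (mulSet M₂ Z)
      = mulSet (mulSet (mulSet (adjSet M₂) C) M₂) Z := by simp only [mulSet_assoc]
  rw [h3]
  refine (mulSet_mono (show mulSet (mulSet (adjSet M₂) C) M₂ ⊆ B by
    rw [hB2]; exact subset_wspan _) (le_refl Z)).trans ?_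
  exact subset_wspan _

lemma Xadj : adjSet (Xset M₁ M₂) = mulSet (adjSet M₁) (adjSet M₂) := by
  rw [show Xset M₁ M₂ = mulSet M₂ M₁ from rfl, adjSet_mulSet]

lemma DC1 (hB1 : B = wspan (mulSet (mulSet M₁ A) (adjSet M₁)))
    (hC : C = wspan (mulSet (mulSet M₂ B) (adjSet M₂)))
    (hT1 : mulSet (mulSet M₁ (adjSet M₁)) M₁ ⊆ M₁)
    (hT2 : mulSet (mulSet M₂ (adjSet M₂)) M₂ ⊆ M₂)
    (hB2 : B = wspan (mulSet (mulSet (adjSet M₂) C) M₂)) (Z : Set (D →L[ℂ] H₃)) :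
    wspan (mulSet (Xset M₁ M₂) (mulSet (adjSet (Xset M₁ M₂)) (mulSet C Z)))
      ⊆ wspan (mulSet C Z) := by
  have hCe : wspan C = wspan (mulSet (mulSet M₂ B) (adjSet M₂)) := by rw [hC]; exact wspan_wspan _
  have e0 : mulSet (Xset M₁ M₂) (mulSet (adjSet (Xset M₁ M₂)) (mulSet C Z))
      = mulSet M₂ (mulSet M₁ (mulSet (adjSet M₁) (mulSet (adjSet M₂) (mulSet C Z)))) := by
    rw [Xadj, show Xset M₁ M₂ = mulSet M₂ M₁ from rfl]
    simp only [mulSet_assoc]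
  rw [e0]
  have e1 : wspan (mulSet M₂ (mulSet M₁ (mulSet (adjSet M₁)
        (mulSet (adjSet M₂) (mulSet C Z)))))
      = wspan (mulSet M₂ (mulSet M₁ (mulSet (adjSet M₁) (mulSet (adjSet M₂)
          (mulSet (mulSet (mulSet M₂ B) (adjSet M₂)) Z))))) :=
    wspan_mul_congr_right _ (wspan_mul_congr_right _ (wspan_mul_congr_right _
      (wspan_mul_congr_right _ (wspan_mul_congr_left _ hCe))))
  rw [e1]
  have e2 : mulSet M₂ (mulSet M₁ (mulSet (adjSet M₁) (mulSet (adjSet M₂)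
        (mulSet (mulSet (mulSet M₂ B) (adjSet M₂)) Z))))
      = mulSet M₂ (mulSet M₁ (mulSet (adjSet M₁) (mulSet (adjSet M₂)
        (mulSet M₂ (mulSet B (mulSet (adjSet M₂) Z)))))) := by
    simp only [mulSet_assoc]
  rw [e2]
  calc wspan (mulSet M₂ (mulSet M₁ (mulSet (adjSet M₁) (mulSet (adjSet M₂)
        (mulSet M₂ (mulSet B (mulSet (adjSet M₂) Z)))))))
      ⊆ wspan (mulSet M₂ (mulSet M₁ (mulSet (adjSet M₁)
          (mulSet B (mulSet (adjSet M₂) Z))))) :=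
        wspan_mul_mono_right _ (wspan_mul_mono_right _ (wspan_mul_mono_right _
          (FB2 M₂ B C hB2 hT2 _)))
    _ ⊆ wspan (mulSet M₂ (mulSet B (mulSet (adjSet M₂) Z))) :=
        wspan_mul_mono_right _ (FB1 M₁ A B hB1 hT1 _)
    _ = wspan (mulSet (mulSet (mulSet M₂ B) (adjSet M₂)) Z) := by
        rw [show mulSet (mulSet (mulSet M₂ B) (adjSet M₂)) Z
          = mulSet M₂ (mulSet B (mulSet (adjSet M₂) Z)) from by simp only [mulSet_assoc]]
    _ = wspan (mulSet C Z) := (wspan_mul_congr_left Z hCe).symm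

lemma DC2 (hB1 : B = wspan (mulSet (mulSet M₁ A) (adjSet M₁)))
    (hC : C = wspan (mulSet (mulSet M₂ B) (adjSet M₂)))
    (hT1 : mulSet (mulSet M₁ (adjSet M₁)) M₁ ⊆ M₁)
    (hT2 : mulSet (mulSet M₂ (adjSet M₂)) M₂ ⊆ M₂)
    (hB2 : B = wspan (mulSet (mulSet (adjSet M₂) C) M₂)) (Z : Set (D →L[ℂ] H₃)) :
    wspan (mulSet C (mulSet (Xset M₁ M₂) (mulSet (adjSet (Xset M₁ M₂)) Z)))
      ⊆ wspan (mulSet C Z) := by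
  have hCe : wspan C = wspan (mulSet (mulSet M₂ B) (adjSet M₂)) := by rw [hC]; exact wspan_wspan _
  have e1 : wspan (mulSet C (mulSet (Xset M₁ M₂) (mulSet (adjSet (Xset M₁ M₂)) Z)))
      = wspan (mulSet (mulSet (mulSet M₂ B) (adjSet M₂))
          (mulSet (Xset M₁ M₂) (mulSet (adjSet (Xset M₁ M₂)) Z))) :=
    wspan_mul_congr_left _ hCe
  rw [e1]
  have e2 : mulSet (mulSet (mulSet M₂ B) (adjSet M₂))
        (mulSet (Xset M₁ M₂) (mulSet (adjSet (Xset M₁ M₂)) Z))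
      = mulSet M₂ (mulSet B (mulSet (adjSet M₂) (mulSet M₂
          (mulSet M₁ (mulSet (adjSet M₁) (mulSet (adjSet M₂) Z)))))) := by
    rw [Xadj, show Xset M₁ M₂ = mulSet M₂ M₁ from rfl]
    simp only [mulSet_assoc]
  rw [e2]
  calc wspan (mulSet M₂ (mulSet B (mulSet (adjSet M₂) (mulSet M₂
        (mulSet M₁ (mulSet (adjSet M₁) (mulSet (adjSet M₂) Z)))))))
      ⊆ wspan (mulSet M₂ (mulSet B
          (mulSet M₁ (mulSet (adjSet M₁) (mulSet (adjSet M₂) Z))))) :=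
        wspan_mul_mono_right _ (FB4 M₂ B C hB2 hT2 _)
    _ ⊆ wspan (mulSet M₂ (mulSet B (mulSet (adjSet M₂) Z))) :=
        wspan_mul_mono_right _ (FB3 M₁ A B hB1 hT1 _)
    _ = wspan (mulSet (mulSet (mulSet M₂ B) (adjSet M₂)) Z) := by
        rw [show mulSet (mulSet (mulSet M₂ B) (adjSet M₂)) Z
          = mulSet M₂ (mulSet B (mulSet (adjSet M₂) Z)) from by simp only [mulSet_assoc]]
    _ = wspan (mulSet C Z) := (wspan_mul_congr_left Z hCe).symm

lemma DA1 (hA : A = wspan (mulSet (mulSet (adjSet M₁) B) M₁))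
    (hB1 : B = wspan (mulSet (mulSet M₁ A) (adjSet M₁)))
    (hT1 : mulSet (mulSet M₁ (adjSet M₁)) M₁ ⊆ M₁)
    (hT2 : mulSet (mulSet M₂ (adjSet M₂)) M₂ ⊆ M₂)
    (hB2 : B = wspan (mulSet (mulSet (adjSet M₂) C) M₂)) (Z : Set (D →L[ℂ] H₁)) :
    wspan (mulSet (adjSet (Xset M₁ M₂)) (mulSet (Xset M₁ M₂) (mulSet A Z)))
      ⊆ wspan (mulSet A Z) := by
  have hAe : wspan A = wspan (mulSet (mulSet (adjSet M₁) B) M₁) := by rw [hA]; exact wspan_wspan _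
  have e0 : mulSet (adjSet (Xset M₁ M₂)) (mulSet (Xset M₁ M₂) (mulSet A Z))
      = mulSet (adjSet M₁) (mulSet (adjSet M₂) (mulSet M₂ (mulSet M₁ (mulSet A Z)))) := by
    rw [Xadj, show Xset M₁ M₂ = mulSet M₂ M₁ from rfl]
    simp only [mulSet_assoc]
  rw [e0]
  have e1 : wspan (mulSet (adjSet M₁) (mulSet (adjSet M₂) (mulSet M₂
        (mulSet M₁ (mulSet A Z)))))
      = wspan (mulSet (adjSet M₁) (mulSet (adjSet M₂) (mulSet M₂ (mulSet M₁
          (mulSet (mulSet (mulSet (adjSet M₁) B) M₁) Z))))) :=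
    wspan_mul_congr_right _ (wspan_mul_congr_right _ (wspan_mul_congr_right _
      (wspan_mul_congr_right _ (wspan_mul_congr_left _ hAe))))
  rw [e1]
  have e2 : mulSet (adjSet M₁) (mulSet (adjSet M₂) (mulSet M₂ (mulSet M₁
        (mulSet (mulSet (mulSet (adjSet M₁) B) M₁) Z))))
      = mulSet (adjSet M₁) (mulSet (adjSet M₂) (mulSet M₂ (mulSet M₁
        (mulSet (adjSet M₁) (mulSet B (mulSet M₁ Z)))))) := by
    simp only [mulSet_assoc]
  rw [e2]
  calc wspan (mulSet (adjSet M₁) (mulSet (adjSet M₂) (mulSet M₂ (mulSet M₁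
        (mulSet (adjSet M₁) (mulSet B (mulSet M₁ Z)))))))
      ⊆ wspan (mulSet (adjSet M₁) (mulSet (adjSet M₂) (mulSet M₂
          (mulSet B (mulSet M₁ Z))))) :=
        wspan_mul_mono_right _ (wspan_mul_mono_right _ (wspan_mul_mono_right _
          (FB1 M₁ A B hB1 hT1 _)))
    _ ⊆ wspan (mulSet (adjSet M₁) (mulSet B (mulSet M₁ Z))) :=
        wspan_mul_mono_right _ (FB2 M₂ B C hB2 hT2 _)
    _ = wspan (mulSet (mulSet (mulSet (adjSet M₁) B) M₁) Z) := by
        rw [show mulSet (mulSet (mulSet (adjSet M₁) B) M₁) Z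
          = mulSet (adjSet M₁) (mulSet B (mulSet M₁ Z)) from by simp only [mulSet_assoc]]
    _ = wspan (mulSet A Z) := (wspan_mul_congr_left Z hAe).symm

lemma DA2 (hA : A = wspan (mulSet (mulSet (adjSet M₁) B) M₁))
    (hB1 : B = wspan (mulSet (mulSet M₁ A) (adjSet M₁)))
    (hT1 : mulSet (mulSet M₁ (adjSet M₁)) M₁ ⊆ M₁)
    (hT2 : mulSet (mulSet M₂ (adjSet M₂)) M₂ ⊆ M₂)
    (hB2 : B = wspan (mulSet (mulSet (adjSet M₂) C) M₂)) (Z : Set (D →L[ℂ] H₁)) :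
    wspan (mulSet A (mulSet (adjSet (Xset M₁ M₂)) (mulSet (Xset M₁ M₂) Z)))
      ⊆ wspan (mulSet A Z) := by
  have hAe : wspan A = wspan (mulSet (mulSet (adjSet M₁) B) M₁) := by rw [hA]; exact wspan_wspan _
  have e1 : wspan (mulSet A (mulSet (adjSet (Xset M₁ M₂)) (mulSet (Xset M₁ M₂) Z)))
      = wspan (mulSet (mulSet (mulSet (adjSet M₁) B) M₁)
          (mulSet (adjSet (Xset M₁ M₂)) (mulSet (Xset M₁ M₂) Z))) :=
    wspan_mul_congr_left _ hAe
  rw [e1]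
  have e2 : mulSet (mulSet (mulSet (adjSet M₁) B) M₁)
        (mulSet (adjSet (Xset M₁ M₂)) (mulSet (Xset M₁ M₂) Z))
      = mulSet (adjSet M₁) (mulSet B (mulSet M₁ (mulSet (adjSet M₁)
          (mulSet (adjSet M₂) (mulSet M₂ (mulSet M₁ Z)))))) := by
    rw [Xadj, show Xset M₁ M₂ = mulSet M₂ M₁ from rfl]
    simp only [mulSet_assoc]
  rw [e2]
  calc wspan (mulSet (adjSet M₁) (mulSet B (mulSet M₁ (mulSet (adjSet M₁)
        (mulSet (adjSet M₂) (mulSet M₂ (mulSet M₁ Z)))))))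
      ⊆ wspan (mulSet (adjSet M₁) (mulSet B
          (mulSet (adjSet M₂) (mulSet M₂ (mulSet M₁ Z))))) :=
        wspan_mul_mono_right _ (FB3 M₁ A B hB1 hT1 _)
    _ ⊆ wspan (mulSet (adjSet M₁) (mulSet B (mulSet M₁ Z))) :=
        wspan_mul_mono_right _ (FB4 M₂ B C hB2 hT2 _)
    _ = wspan (mulSet (mulSet (mulSet (adjSet M₁) B) M₁) Z) := by
        rw [show mulSet (mulSet (mulSet (adjSet M₁) B) M₁) Z
          = mulSet (adjSet M₁) (mulSet B (mulSet M₁ Z)) from by simp only [mulSet_assoc]]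
    _ = wspan (mulSet A Z) := (wspan_mul_congr_left Z hAe).symm

lemma EA (hA : A = wspan (mulSet (mulSet (adjSet M₁) B) M₁))
    (hB2 : B = wspan (mulSet (mulSet (adjSet M₂) C) M₂)) :
    A = wspan (mulSet (adjSet (Xset M₁ M₂)) (mulSet C (Xset M₁ M₂))) := by
  have hBe : wspan B = wspan (mulSet (mulSet (adjSet M₂) C) M₂) := by rw [hB2]; exact wspan_wspan _
  calc A = wspan (mulSet (mulSet (adjSet M₁) B) M₁) := hA
    _ = wspan (mulSet (adjSet M₁) (mulSet B M₁)) := by rw [mulSet_assoc]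
    _ = wspan (mulSet (adjSet M₁) (mulSet (mulSet (mulSet (adjSet M₂) C) M₂) M₁)) :=
        wspan_mul_congr_right _ (wspan_mul_congr_left _ hBe)
    _ = wspan (mulSet (adjSet (Xset M₁ M₂)) (mulSet C (Xset M₁ M₂))) := by
        apply congrArg wspan
        rw [Xadj, show Xset M₁ M₂ = mulSet M₂ M₁ from rfl]
        simp only [mulSet_assoc]

lemma EC (hB1 : B = wspan (mulSet (mulSet M₁ A) (adjSet M₁)))
    (hC : C = wspan (mulSet (mulSet M₂ B) (adjSet M₂))) :
    C = wspan (mulSet (Xset M₁ M₂) (mulSet A (adjSet (Xset M₁ M₂)))) := by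
  have hBe : wspan B = wspan (mulSet (mulSet M₁ A) (adjSet M₁)) := by rw [hB1]; exact wspan_wspan _
  calc C = wspan (mulSet (mulSet M₂ B) (adjSet M₂)) := hC
    _ = wspan (mulSet M₂ (mulSet B (adjSet M₂))) := by rw [mulSet_assoc]
    _ = wspan (mulSet M₂ (mulSet (mulSet (mulSet M₁ A) (adjSet M₁)) (adjSet M₂))) :=
        wspan_mul_congr_right _ (wspan_mul_congr_left _ hBe)
    _ = wspan (mulSet (Xset M₁ M₂) (mulSet A (adjSet (Xset M₁ M₂)))) := by
        apply congrArg wspan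
        rw [Xadj, show Xset M₁ M₂ = mulSet M₂ M₁ from rfl]
        simp only [mulSet_assoc]

lemma RA1 (hB1 : B = wspan (mulSet (mulSet M₁ A) (adjSet M₁)))
    (hC : C = wspan (mulSet (mulSet M₂ B) (adjSet M₂)))
    (hT1 : mulSet (mulSet M₁ (adjSet M₁)) M₁ ⊆ M₁)
    (hT2 : mulSet (mulSet M₂ (adjSet M₂)) M₂ ⊆ M₂)
    (hB2 : B = wspan (mulSet (mulSet (adjSet M₂) C) M₂)) (m : ℕ) (Z : Set (D →L[ℂ] H₃)) :
    wspan (mulSet (adjSet (ww M₁ M₂ m)) (mulSet C Z))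
      ⊆ wspan (mulSet (adjSet (Xset M₁ M₂)) (mulSet C Z)) := by
  induction m with
  | zero => rw [ww_zero]
  | succ m ih =>
      have hadj : adjSet (ww M₁ M₂ (m + 1)) = mulSet (adjSet (ww M₁ M₂ m))
          (mulSet (Xset M₁ M₂) (adjSet (Xset M₁ M₂))) := by
        rw [ww_succ, adjSet_mulSet, adjSet_mulSet, adjSet_adjSet]
      rw [hadj]
      have e : mulSet (mulSet (adjSet (ww M₁ M₂ m))
            (mulSet (Xset M₁ M₂) (adjSet (Xset M₁ M₂)))) (mulSet C Z)
          = mulSet (adjSet (ww M₁ M₂ m)) (mulSet (Xset M₁ M₂)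
              (mulSet (adjSet (Xset M₁ M₂)) (mulSet C Z))) := by
        simp only [mulSet_assoc]
      rw [e]
      exact (wspan_mul_mono_right _ (DC1 M₁ M₂ A B C hB1 hC hT1 hT2 hB2 Z)).trans ih

lemma RA2 (hB1 : B = wspan (mulSet (mulSet M₁ A) (adjSet M₁)))
    (hC : C = wspan (mulSet (mulSet M₂ B) (adjSet M₂)))
    (hT1 : mulSet (mulSet M₁ (adjSet M₁)) M₁ ⊆ M₁)
    (hT2 : mulSet (mulSet M₂ (adjSet M₂)) M₂ ⊆ M₂)
    (hB2 : B = wspan (mulSet (mulSet (adjSet M₂) C) M₂)) (n : ℕ) :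
    wspan (mulSet (adjSet (Xset M₁ M₂)) (mulSet C (ww M₁ M₂ n)))
      ⊆ wspan (mulSet (adjSet (Xset M₁ M₂)) (mulSet C (Xset M₁ M₂))) := by
  induction n with
  | zero => rw [ww_zero]
  | succ n ih =>
      rw [ww_succ]
      have e : mulSet (adjSet (Xset M₁ M₂)) (mulSet C
            (mulSet (mulSet (Xset M₁ M₂) (adjSet (Xset M₁ M₂))) (ww M₁ M₂ n)))
          = mulSet (adjSet (Xset M₁ M₂)) (mulSet C (mulSet (Xset M₁ M₂)
              (mulSet (adjSet (Xset M₁ M₂)) (ww M₁ M₂ n)))) := by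
        simp only [mulSet_assoc]
      rw [e]
      exact (wspan_mul_mono_right _
        (DC2 M₁ M₂ A B C hB1 hC hT1 hT2 hB2 (ww M₁ M₂ n))).trans ih

lemma RC1 (hA : A = wspan (mulSet (mulSet (adjSet M₁) B) M₁))
    (hB1 : B = wspan (mulSet (mulSet M₁ A) (adjSet M₁)))
    (hT1 : mulSet (mulSet M₁ (adjSet M₁)) M₁ ⊆ M₁)
    (hT2 : mulSet (mulSet M₂ (adjSet M₂)) M₂ ⊆ M₂)
    (hB2 : B = wspan (mulSet (mulSet (adjSet M₂) C) M₂)) (n : ℕ) (Z : Set (D →L[ℂ] H₁)) :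
    wspan (mulSet (ww M₁ M₂ n) (mulSet A Z))
      ⊆ wspan (mulSet (Xset M₁ M₂) (mulSet A Z)) := by
  induction n with
  | zero => rw [ww_zero]
  | succ n ih =>
      rw [ww_succ]
      have e : mulSet (mulSet (mulSet (Xset M₁ M₂) (adjSet (Xset M₁ M₂))) (ww M₁ M₂ n))
            (mulSet A Z)
          = mulSet (Xset M₁ M₂) (mulSet (adjSet (Xset M₁ M₂))
              (mulSet (ww M₁ M₂ n) (mulSet A Z))) := by
        simp only [mulSet_assoc]
      rw [e]
      refine le_trans (wspan_mul_mono_right _ (wspan_mul_mono_right _ ih)) ?_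
      exact wspan_mul_mono_right _ (DA1 M₁ M₂ A B C hA hB1 hT1 hT2 hB2 Z)

lemma RC2 (hA : A = wspan (mulSet (mulSet (adjSet M₁) B) M₁))
    (hB1 : B = wspan (mulSet (mulSet M₁ A) (adjSet M₁)))
    (hT1 : mulSet (mulSet M₁ (adjSet M₁)) M₁ ⊆ M₁)
    (hT2 : mulSet (mulSet M₂ (adjSet M₂)) M₂ ⊆ M₂)
    (hB2 : B = wspan (mulSet (mulSet (adjSet M₂) C) M₂)) (m : ℕ) :
    wspan (mulSet (Xset M₁ M₂) (mulSet A (adjSet (ww M₁ M₂ m))))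
      ⊆ wspan (mulSet (Xset M₁ M₂) (mulSet A (adjSet (Xset M₁ M₂)))) := by
  induction m with
  | zero => rw [ww_zero]
  | succ m ih =>
      rw [adj_ww_succ]
      have e : mulSet (Xset M₁ M₂) (mulSet A
            (mulSet (mulSet (adjSet (Xset M₁ M₂)) (Xset M₁ M₂)) (adjSet (ww M₁ M₂ m))))
          = mulSet (Xset M₁ M₂) (mulSet A (mulSet (adjSet (Xset M₁ M₂))
              (mulSet (Xset M₁ M₂) (adjSet (ww M₁ M₂ m))))) := by
        simp only [mulSet_assoc]
      rw [e]
      refine le_trans (wspan_mul_mono_right _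
        (DA2 M₁ M₂ A B C hA hB1 hT1 hT2 hB2 (adjSet (ww M₁ M₂ m)))) ih

lemma GoalA (hA : A = wspan (mulSet (mulSet (adjSet M₁) B) M₁))
    (hB1 : B = wspan (mulSet (mulSet M₁ A) (adjSet M₁)))
    (hC : C = wspan (mulSet (mulSet M₂ B) (adjSet M₂)))
    (hT1 : mulSet (mulSet M₁ (adjSet M₁)) M₁ ⊆ M₁)
    (hT2 : mulSet (mulSet M₂ (adjSet M₂)) M₂ ⊆ M₂)
    (hB2 : B = wspan (mulSet (mulSet (adjSet M₂) C) M₂)) :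
    A = wspan (mulSet (mulSet (adjSet (Mset M₁ M₂)) C) (Mset M₁ M₂)) := by
  have hXM : Xset M₁ M₂ ⊆ Mset M₁ M₂ := fun t ht =>
    Submodule.subset_span (Set.mem_iUnion.mpr ⟨0, ht⟩)
  rw [mulSet_assoc]
  apply Set.Subset.antisymm
  · rw [EA M₁ M₂ A B C hA hB2]
    exact wspan_mono (mulSet_mono (adjSet_mono hXM) (mulSet_mono (le_refl C) hXM))
  · have h1 : wspan (mulSet (adjSet (Mset M₁ M₂)) (mulSet C (Mset M₁ M₂)))
        ⊆ wspan (mulSet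
            (↑(Submodule.span ℂ (adjSet (Uset M₁ M₂))) : Set (H₃ →L[ℂ] H₁))
            (mulSet C (↑(Submodule.span ℂ (Uset M₁ M₂)) : Set (H₁ →L[ℂ] H₃)))) :=
      wspan_mono (mulSet_mono (adjSet_span _) (le_refl _))
    refine h1.trans ?_
    rw [wspan_mul_span_left, wspan_mul_congr_right _ (wspan_mul_span_right C (Uset M₁ M₂))]
    have h3 : mulSet (adjSet (Uset M₁ M₂)) (mulSet C (Uset M₁ M₂))
        ⊆ wspan (mulSet (adjSet (Xset M₁ M₂)) (mulSet C (Xset M₁ M₂))) := by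
      rintro _ ⟨_, ⟨w, hw, rfl⟩, _, ⟨c, hc, v, hv, rfl⟩, rfl⟩
      obtain ⟨m, hm⟩ := Set.mem_iUnion.mp hw
      obtain ⟨n, hn⟩ := Set.mem_iUnion.mp hv
      have hmem : (ContinuousLinearMap.adjoint w).comp (c.comp v)
          ∈ mulSet (adjSet (ww M₁ M₂ m)) (mulSet C (ww M₁ M₂ n)) :=
        mem_mulSet ⟨w, hm, rfl⟩ (mem_mulSet hc hn)
      have h4 := subset_wspan _ hmem
      have h5 := RA1 M₁ M₂ A B C hB1 hC hT1 hT2 hB2 m (ww M₁ M₂ n) h4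
      exact RA2 M₁ M₂ A B C hB1 hC hT1 hT2 hB2 n h5
    refine (wspan_le h3).trans ?_
    rw [← EA M₁ M₂ A B C hA hB2]

lemma GoalC (hA : A = wspan (mulSet (mulSet (adjSet M₁) B) M₁))
    (hB1 : B = wspan (mulSet (mulSet M₁ A) (adjSet M₁)))
    (hC : C = wspan (mulSet (mulSet M₂ B) (adjSet M₂)))
    (hT1 : mulSet (mulSet M₁ (adjSet M₁)) M₁ ⊆ M₁)
    (hT2 : mulSet (mulSet M₂ (adjSet M₂)) M₂ ⊆ M₂)
    (hB2 : B = wspan (mulSet (mulSet (adjSet M₂) C) M₂)) :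
    C = wspan (mulSet (mulSet (Mset M₁ M₂) A) (adjSet (Mset M₁ M₂))) := by
  have hXM : Xset M₁ M₂ ⊆ Mset M₁ M₂ := fun t ht =>
    Submodule.subset_span (Set.mem_iUnion.mpr ⟨0, ht⟩)
  rw [mulSet_assoc]
  apply Set.Subset.antisymm
  · rw [EC M₁ M₂ A B C hB1 hC]
    exact wspan_mono (mulSet_mono hXM (mulSet_mono (le_refl A) (adjSet_mono hXM)))
  · have h1 : wspan (mulSet (Mset M₁ M₂) (mulSet A (adjSet (Mset M₁ M₂))))
        ⊆ wspan (mulSet (↑(Submodule.span ℂ (Uset M₁ M₂)) : Set (H₁ →L[ℂ] H₃))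
            (mulSet A (↑(Submodule.span ℂ (adjSet (Uset M₁ M₂))) : Set (H₃ →L[ℂ] H₁)))) :=
      wspan_mono (mulSet_mono (le_refl _) (mulSet_mono (le_refl A) (adjSet_span _)))
    refine h1.trans ?_
    rw [wspan_mul_span_left,
      wspan_mul_congr_right _ (wspan_mul_span_right A (adjSet (Uset M₁ M₂)))]
    have h3 : mulSet (Uset M₁ M₂) (mulSet A (adjSet (Uset M₁ M₂)))
        ⊆ wspan (mulSet (Xset M₁ M₂) (mulSet A (adjSet (Xset M₁ M₂)))) := by
      rintro _ ⟨u, hu, _, ⟨a, ha, _, ⟨w, hw, rfl⟩, rfl⟩, rfl⟩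
      obtain ⟨n, hn⟩ := Set.mem_iUnion.mp hu
      obtain ⟨m, hm⟩ := Set.mem_iUnion.mp hw
      have hmem : u.comp (a.comp (ContinuousLinearMap.adjoint w))
          ∈ mulSet (ww M₁ M₂ n) (mulSet A (adjSet (ww M₁ M₂ m))) :=
        mem_mulSet hn (mem_mulSet ha ⟨w, hm, rfl⟩)
      have h4 := subset_wspan _ hmem
      have h5 := RC1 M₁ M₂ A B C hA hB1 hT1 hT2 hB2 n (adjSet (ww M₁ M₂ m)) h4
      exact RC2 M₁ M₂ A B C hA hB1 hT1 hT2 hB2 m h5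
    refine (wspan_le h3).trans ?_
    rw [← EC M₁ M₂ A B C hB1 hC]

end Main
/-- **Theorem 2.3.** TRO equivalence is an equivalence relation: in particular, if `A` is TRO
equivalent to `B` and `B` is TRO equivalent to `C`, then `A` is TRO equivalent to `C`. -/
theorem stmt2 {H₁ : Type*} {H₂ : Type*} {H₃ : Type*}
    [NormedAddCommGroup H₁] [InnerProductSpace ℂ H₁] [CompleteSpace H₁]
    [NormedAddCommGroup H₂] [InnerProductSpace ℂ H₂] [CompleteSpace H₂]
    [NormedAddCommGroup H₃] [InnerProductSpace ℂ H₃] [CompleteSpace H₃]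
    (A : Set (H₁ →L[ℂ] H₁)) (B : Set (H₂ →L[ℂ] H₂)) (C : Set (H₃ →L[ℂ] H₃))
    (hA : IsWStarClosedAlgebra A) (hB : IsWStarClosedAlgebra B)
    (hC : IsWStarClosedAlgebra C)
    (hAB : TROEquivalent A B) (hBC : TROEquivalent B C) :
    TROEquivalent A C := by
  obtain ⟨M₁, ⟨_, hT1⟩, hA1, hB1⟩ := hAB
  obtain ⟨M₂, ⟨_, hT2⟩, hB2, hC2⟩ := hBC
  exact ⟨Mset M₁ M₂, isTRO_Mset M₁ M₂,
    GoalA M₁ M₂ A B C hA1 hB1 hC2 hT1 hT2 hB2,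
    GoalC M₁ M₂ A B C hA1 hB1 hC2 hT1 hT2 hB2⟩
end
end
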